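/- arXiv:1001.1604 — 10 statements merged into one kernel-verified Lean document; each statement's English description precedes it below -/
import Mathlib

section
/- At every point of U and for every X ∈ ℝ^m, P²(X) = −(g/ρ²) Σ_{a,b} ⟨X, e_a⟩ g^{ab} e_b. In particular, if Y lies in the tangent plane span{e₁, e₂} then P²(Y) = −(g/ρ²) Y. -/
open scoped BigOperators

noncomputable def pd (a : Fin 2) (f : ℝ × ℝ → ℝ) (u : ℝ × ℝ) : ℝ :=
  fderiv ℝ f u (if a = 0 then (1, 0) else (0, 1))

noncomputable def pb (ρ f h : ℝ × ℝ → ℝ) (u : ℝ × ℝ) : ℝ :=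
  (1 / ρ u) * (pd 0 f u * pd 1 h u - pd 1 f u * pd 0 h u)

noncomputable def vpd {m : ℕ} (F : ℝ × ℝ → Fin m → ℝ) (a : Fin 2) (u : ℝ × ℝ) : Fin m → ℝ :=
  fun i => pd a (fun v => F v i) u

noncomputable def dot {m : ℕ} (X Y : Fin m → ℝ) : ℝ := ∑ i, X i * Y i

noncomputable def gmat {m : ℕ} (x : ℝ × ℝ → Fin m → ℝ) (u : ℝ × ℝ) : Matrix (Fin 2) (Fin 2) ℝ :=
  Matrix.of fun a b => dot (vpd x a u) (vpd x b u)

noncomputable def Pmap {m : ℕ} (ρ : ℝ × ℝ → ℝ) (x : ℝ × ℝ → Fin m → ℝ) (u : ℝ × ℝ)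
    (X : Fin m → ℝ) : Fin m → ℝ :=
  fun i => ∑ j, pb ρ (fun v => x v i) (fun v => x v j) u * X j

noncomputable def Smap {m : ℕ} (ρ : ℝ × ℝ → ℝ) (x N : ℝ × ℝ → Fin m → ℝ) (u : ℝ × ℝ)
    (X : Fin m → ℝ) : Fin m → ℝ :=
  fun i => ∑ j, pb ρ (fun v => x v i) (fun v => N v j) u * X j

noncomputable def STmap {m : ℕ} (ρ : ℝ × ℝ → ℝ) (x N : ℝ × ℝ → Fin m → ℝ) (u : ℝ × ℝ)
    (X : Fin m → ℝ) : Fin m → ℝ :=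
  fun j => ∑ i, X i * pb ρ (fun v => x v i) (fun v => N v j) u

noncomputable def Bmap {m : ℕ} (ρ : ℝ × ℝ → ℝ) (x N : ℝ × ℝ → Fin m → ℝ) (u : ℝ × ℝ)
    (X : Fin m → ℝ) : Fin m → ℝ :=
  Pmap ρ x u (Smap ρ x N u X)

noncomputable def Amap {m : ℕ} (ρ : ℝ × ℝ → ℝ) (x N : ℝ × ℝ → Fin m → ℝ) (u : ℝ × ℝ)
    (X : Fin m → ℝ) : Fin m → ℝ :=
  fun i => -(Pmap ρ x u (STmap ρ x N u X) i)

noncomputable def hmat {m : ℕ} (x N : ℝ × ℝ → Fin m → ℝ) (u : ℝ × ℝ) : Matrix (Fin 2) (Fin 2) ℝ :=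
  Matrix.of fun a b => -(dot (vpd x a u) (vpd N b u))

noncomputable def Wmap {m : ℕ} (x N : ℝ × ℝ → Fin m → ℝ) (u : ℝ × ℝ) (a b : Fin 2) : ℝ :=
  ∑ c, (gmat x u)⁻¹ a c * hmat x N u c b

noncomputable def eps2 : Fin 2 → Fin 2 → ℝ := fun a b =>
  if a = 0 ∧ b = 1 then 1 else if a = 1 ∧ b = 0 then -1 else 0

noncomputable def lc {n : ℕ} (f : Fin n → Fin n) : ℝ :=
  if h : Function.Bijective f then ((Equiv.Perm.sign (Equiv.ofBijective f h) : ℤ) : ℝ) else 0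

def tuple3 {α : Type*} {q : ℕ} (i k l : α) (I : Fin q → α) : Fin (q + 3) → α :=
  Fin.cons i (Fin.cons k (Fin.cons l I))

noncomputable def Zvec {q : ℕ} (ρ : ℝ × ℝ → ℝ) (x : ℝ × ℝ → Fin (q + 3) → ℝ) (u : ℝ × ℝ)
    (I : Fin q → Fin (q + 3)) : Fin (q + 3) → ℝ :=
  fun i => (ρ u / (2 * Real.sqrt ((gmat x u).det * (Nat.factorial q)))) *
    ∑ k, ∑ l, lc (tuple3 i k l I) * pb ρ (fun v => x v k) (fun v => x v l) u

theorem statement2 (U : Set (ℝ × ℝ)) (hU : IsOpen U) (p : ℕ) (hp : 1 ≤ p)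
    (ρ : ℝ × ℝ → ℝ) (hρ : ContDiffOn ℝ (⊤ : ℕ∞) ρ U) (hρ0 : ∀ u ∈ U, ρ u ≠ 0)
    (x : ℝ × ℝ → Fin (p + 2) → ℝ) (hx : ContDiffOn ℝ (⊤ : ℕ∞) x U)
    (hind : ∀ u ∈ U, LinearIndependent ℝ ![vpd x 0 u, vpd x 1 u])
    (hg : ∀ u ∈ U, 0 < (gmat x u).det) :
    ∀ u ∈ U,
      (∀ X : Fin (p + 2) → ℝ, ∀ i,
        Pmap ρ x u (Pmap ρ x u X) i =
          -((gmat x u).det / (ρ u) ^ 2) *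
            ∑ a, ∑ b, dot X (vpd x a u) * (gmat x u)⁻¹ a b * vpd x b u i) ∧
      (∀ Y ∈ Submodule.span ℝ ({vpd x 0 u, vpd x 1 u} : Set (Fin (p + 2) → ℝ)), ∀ i,
        Pmap ρ x u (Pmap ρ x u Y) i = -((gmat x u).det / (ρ u) ^ 2) * Y i) := by
  intro u hu
  have hr : ρ u ≠ 0 := hρ0 u hu
  have hd : (gmat x u).det ≠ 0 := (hg u hu).ne'
  set E0 : Fin (p + 2) → ℝ := vpd x 0 u with hE0
  set E1 : Fin (p + 2) → ℝ := vpd x 1 u with hE1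
  have hP : ∀ (X : Fin (p + 2) → ℝ) i, Pmap ρ x u X i =
      (1 / ρ u) * (E0 i * dot E1 X - E1 i * dot E0 X) := by
    intro X i
    have h1 : Pmap ρ x u X i =
        ∑ j, ((1 / ρ u) * (E0 i * (E1 j * X j)) - (1 / ρ u) * (E1 i * (E0 j * X j))) := by
      apply Finset.sum_congr rfl
      intro j _
      simp only [pb, hE0, hE1, vpd]
      ring
    rw [h1, Finset.sum_sub_distrib, ← Finset.mul_sum, ← Finset.mul_sum,
      ← Finset.mul_sum, ← Finset.mul_sum]
    simp only [dot]
    ring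
  have hdot : ∀ (Y X : Fin (p + 2) → ℝ), dot Y (Pmap ρ x u X) =
      (1 / ρ u) * (dot Y E0 * dot E1 X - dot Y E1 * dot E0 X) := by
    intro Y X
    have h1 : dot Y (Pmap ρ x u X) =
        ∑ j, ((1 / ρ u) * ((Y j * E0 j) * dot E1 X) - (1 / ρ u) * ((Y j * E1 j) * dot E0 X)) := by
      apply Finset.sum_congr rfl
      intro j _
      rw [hP]
      ring
    rw [h1, Finset.sum_sub_distrib, ← Finset.mul_sum, ← Finset.mul_sum,
      ← Finset.sum_mul, ← Finset.sum_mul]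
    simp only [dot]
    ring
  have hg00 : gmat x u 0 0 = dot E0 E0 := rfl
  have hg01 : gmat x u 0 1 = dot E0 E1 := rfl
  have hg10 : gmat x u 1 0 = dot E1 E0 := rfl
  have hg11 : gmat x u 1 1 = dot E1 E1 := rfl
  have hsym : dot E1 E0 = dot E0 E1 := by simp [dot, mul_comm]
  have hdet : (gmat x u).det = dot E0 E0 * dot E1 E1 - dot E0 E1 * dot E1 E0 := by
    rw [Matrix.det_fin_two, hg00, hg01, hg10, hg11]
  have hinv : (gmat x u)⁻¹ = ((gmat x u).det)⁻¹ •
      Matrix.of ![![dot E1 E1, -(dot E0 E1)], ![-(dot E1 E0), dot E0 E0]] := by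
    rw [Matrix.inv_def, Matrix.adjugate_fin_two, Ring.inverse_eq_inv']
    congr 1
  have hdc : ∀ X Y : Fin (p + 2) → ℝ, dot X Y = dot Y X := by
    intro X Y; simp [dot, mul_comm]
  have hK : dot E0 E0 * dot E1 E1 - dot E0 E1 * dot E0 E1 ≠ 0 := by
    rw [hdet, hsym] at hd; exact hd
  have key : ∀ (X : Fin (p + 2) → ℝ) i,
      Pmap ρ x u (Pmap ρ x u X) i =
        -((gmat x u).det / (ρ u) ^ 2) *
          ∑ a, ∑ b, dot X (vpd x a u) * (gmat x u)⁻¹ a b * vpd x b u i := by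
    intro X i
    rw [hP, hdot, hdot, hinv]
    simp only [Fin.sum_univ_two, Matrix.smul_apply, Matrix.of_apply, Matrix.cons_val',
      Matrix.cons_val_zero, Matrix.cons_val_one, Matrix.head_cons, Matrix.empty_val',
      Matrix.cons_val_fin_one, Matrix.head_fin_const, smul_eq_mul, ← hE0, ← hE1]
    rw [hdc X E0, hdc X E1]
    field_simp
    try ring
  refine ⟨key, ?_⟩
  intro Y hY i
  rw [key]
  rcases Submodule.mem_span_pair.mp hY with ⟨a, b, hab⟩
  have hYi : ∀ j, Y j = a * E0 j + b * E1 j := by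
    intro j
    rw [← hab]; simp
  have hdY : ∀ Z : Fin (p + 2) → ℝ, dot Y Z = a * dot E0 Z + b * dot E1 Z := by
    intro Z
    simp only [dot, Finset.mul_sum, ← Finset.sum_add_distrib]
    apply Finset.sum_congr rfl
    intro j _
    rw [hYi j]; ring
  rw [hinv]
  simp only [Fin.sum_univ_two, Matrix.smul_apply, Matrix.of_apply, Matrix.cons_val',
    Matrix.cons_val_zero, Matrix.cons_val_one, Matrix.head_cons, Matrix.empty_val',
    Matrix.cons_val_fin_one, Matrix.head_fin_const, smul_eq_mul, ← hE0, ← hE1]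
  rw [hdc Y E0, hdc Y E1, hdc E0 Y, hdc E1 Y] <;> try skip
  rw [hdY E0, hdY E1, hYi i, hdet, hsym]
  have hK2 : dot E0 E0 * dot E1 E1 - dot E0 E1 ^ 2 ≠ 0 := by rw [sq]; exact hK
  field_simp [hK, hK2]
  ring
end

section
/- At every point of U and for every X ∈ ℝ^m, S(X) = −(1/ρ)(⟨X, ∂N/∂u¹⟩ e₂ − ⟨X, ∂N/∂u²⟩ e₁); in particular S(X) lies in the tangent plane span{e₁, e₂}. -/
open scoped BigOperators

theorem statement3 (U : Set (ℝ × ℝ)) (hU : IsOpen U) (p : ℕ) (hp : 1 ≤ p)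
    (ρ : ℝ × ℝ → ℝ) (hρ : ContDiffOn ℝ (⊤ : ℕ∞) ρ U) (hρ0 : ∀ u ∈ U, ρ u ≠ 0)
    (x : ℝ × ℝ → Fin (p + 2) → ℝ) (hx : ContDiffOn ℝ (⊤ : ℕ∞) x U)
    (hind : ∀ u ∈ U, LinearIndependent ℝ ![vpd x 0 u, vpd x 1 u])
    (hg : ∀ u ∈ U, 0 < (gmat x u).det)
    (N : ℝ × ℝ → Fin (p + 2) → ℝ) (hN : ContDiffOn ℝ (⊤ : ℕ∞) N U)
    (hNt : ∀ u ∈ U, ∀ a : Fin 2, dot (N u) (vpd x a u) = 0)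
    (hNn : ∀ u ∈ U, dot (N u) (N u) = 1) :
    ∀ u ∈ U, ∀ X : Fin (p + 2) → ℝ,
      (∀ i, Smap ρ x N u X i =
        -(1 / ρ u) * (dot X (vpd N 0 u) * vpd x 1 u i - dot X (vpd N 1 u) * vpd x 0 u i)) ∧
      Smap ρ x N u X ∈ Submodule.span ℝ ({vpd x 0 u, vpd x 1 u} : Set (Fin (p + 2) → ℝ)) := by
  intro u hU X
  have key : ∀ i, Smap ρ x N u X i =
      -(1 / ρ u) * (dot X (vpd N 0 u) * vpd x 1 u i - dot X (vpd N 1 u) * vpd x 0 u i) := by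
    intro i
    simp only [Smap, pb, dot, vpd, Finset.sum_mul, mul_sub, Finset.mul_sum, neg_mul,
      ← Finset.sum_sub_distrib, ← Finset.sum_neg_distrib, neg_sub]
    refine Finset.sum_congr rfl fun j _ => by ring
  refine ⟨key, ?_⟩
  rw [Submodule.mem_span_pair]
  refine ⟨(1 / ρ u) * dot X (vpd N 1 u), -(1 / ρ u) * dot X (vpd N 0 u), ?_⟩
  funext i
  simp only [Pi.add_apply, Pi.smul_apply, smul_eq_mul, key i]
  ring
end

section
/- The traces of B and of A over ℝ^m coincide with the traces of their restrictions to the tangent plane span{e₁,e₂}, and all equal (g/ρ²) times the trace of the Weingarten map: Σ_i B^i_i = Σ_i A^i_i = (g/ρ²)(W¹₁ + W²₂), where B^i_j and A^i_j denote the matrix components of the pointwise linear maps B and A in the standard basis of ℝ^m. -/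
open scoped BigOperators

lemma dot_comm' {m : ℕ} (A B : Fin m → ℝ) : dot A B = dot B A :=
  Finset.sum_congr rfl fun _ _ => mul_comm _ _

lemma expc1' {m : ℕ} (c : ℝ) (A B C D : Fin m → ℝ) :
    ∑ i, ∑ j, c * ((A i * B j) * (C j * D i)) = c * (dot A D * dot B C) := by
  simp only [dot, Finset.mul_sum, Finset.sum_mul]
  rw [Finset.sum_comm]
  exact Finset.sum_congr rfl fun i _ => Finset.sum_congr rfl fun j _ => by ring

lemma expc2' {m : ℕ} (c : ℝ) (A B C D : Fin m → ℝ) :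
    ∑ i, ∑ j, c * ((A i * B j) * (C i * D j)) = c * (dot A C * dot B D) := by
  simp only [dot, Finset.mul_sum, Finset.sum_mul]
  rw [Finset.sum_comm]
  exact Finset.sum_congr rfl fun i _ => Finset.sum_congr rfl fun j _ => by ring

lemma sum_pair_l' {m : ℕ} (c a b : ℝ) (P Q Y : Fin m → ℝ) :
    ∑ k, Y k * (c * (P k * a - Q k * b)) = c * (dot Y P * a - dot Y Q * b) := by
  simp only [dot, Finset.mul_sum, Finset.sum_mul, mul_sub, sub_mul, ← Finset.sum_sub_distrib]
  exact Finset.sum_congr rfl fun k _ => by ring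

lemma sum_pair'' {m : ℕ} (c a b : ℝ) (P Q Y : Fin m → ℝ) :
    ∑ j, (c * (a * P j - b * Q j)) * Y j = c * (a * dot P Y - b * dot Q Y) := by
  simp only [dot, Finset.mul_sum, Finset.sum_mul, mul_sub, sub_mul, ← Finset.sum_sub_distrib]
  exact Finset.sum_congr rfl fun k _ => by ring

lemma sum_quad' {m : ℕ} (c c' a b s t : ℝ) (P Q R S : Fin m → ℝ) :
    ∑ j, (c * (a * P j - b * Q j)) * (c' * (s * R j - t * S j))
    = c * c' * (a * s * dot P R - a * t * dot P S - b * s * dot Q R + b * t * dot Q S) := by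
  simp only [dot, Finset.mul_sum, mul_sub, mul_add, ← Finset.sum_sub_distrib,
    ← Finset.sum_add_distrib]
  exact Finset.sum_congr rfl fun j _ => by ring

theorem statement4 (U : Set (ℝ × ℝ)) (hU : IsOpen U) (p : ℕ) (hp : 1 ≤ p)
    (ρ : ℝ × ℝ → ℝ) (hρ : ContDiffOn ℝ (⊤ : ℕ∞) ρ U) (hρ0 : ∀ u ∈ U, ρ u ≠ 0)
    (x : ℝ × ℝ → Fin (p + 2) → ℝ) (hx : ContDiffOn ℝ (⊤ : ℕ∞) x U)
    (hind : ∀ u ∈ U, LinearIndependent ℝ ![vpd x 0 u, vpd x 1 u])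
    (hg : ∀ u ∈ U, 0 < (gmat x u).det)
    (N : ℝ × ℝ → Fin (p + 2) → ℝ) (hN : ContDiffOn ℝ (⊤ : ℕ∞) N U)
    (hNt : ∀ u ∈ U, ∀ a : Fin 2, dot (N u) (vpd x a u) = 0)
    (hNn : ∀ u ∈ U, dot (N u) (N u) = 1) :
    ∀ u ∈ U,
      (∑ i, ∑ j, pb ρ (fun v => x v i) (fun v => x v j) u * pb ρ (fun v => x v j) (fun v => N v i) u
        = ((gmat x u).det / (ρ u) ^ 2) * ∑ a, Wmap x N u a a) ∧
      (-∑ i, ∑ j, pb ρ (fun v => x v i) (fun v => x v j) u * pb ρ (fun v => x v i) (fun v => N v j) u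
        = ((gmat x u).det / (ρ u) ^ 2) * ∑ a, Wmap x N u a a) ∧
      (∀ Bc : Fin 2 → Fin 2 → ℝ,
        (∀ b : Fin 2, ∀ i, Bmap ρ x N u (vpd x b u) i = ∑ a, Bc a b * vpd x a u i) →
        ∑ a, Bc a a = ((gmat x u).det / (ρ u) ^ 2) * ∑ a, Wmap x N u a a) ∧
      (∀ Ac : Fin 2 → Fin 2 → ℝ,
        (∀ b : Fin 2, ∀ i, Amap ρ x N u (vpd x b u) i = ∑ a, Ac a b * vpd x a u i) →
        ∑ a, Ac a a = ((gmat x u).det / (ρ u) ^ 2) * ∑ a, Wmap x N u a a) := by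
  
  intro u hu
  have hr : ρ u ≠ 0 := hρ0 u hu
  have hd : (gmat x u).det ≠ 0 := ne_of_gt (hg u hu)
  have hG : ∀ a b : Fin 2, dot (vpd x a u) (vpd x b u) = gmat x u a b := fun _ _ => rfl
  have hHd : ∀ a b : Fin 2, dot (vpd x a u) (vpd N b u) = -(hmat x N u a b) := fun a b => by
    simp [hmat]
  have hME : ∀ a b : Fin 2, dot (vpd N a u) (vpd x b u) = -(hmat x N u b a) := fun a b => by
    rw [dot_comm']; exact hHd b a
  have key : ((gmat x u).det / (ρ u) ^ 2) * ∑ a, Wmap x N u a a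
      = (1 / ρ u) * (1 / ρ u) * (gmat x u 1 1 * hmat x N u 0 0 - gmat x u 0 1 * hmat x N u 1 0
        - gmat x u 1 0 * hmat x N u 0 1 + gmat x u 0 0 * hmat x N u 1 1) := by
    have hinv : (gmat x u)⁻¹
        = ((gmat x u).det)⁻¹ • !![gmat x u 1 1, -(gmat x u 0 1); -(gmat x u 1 0), gmat x u 0 0] := by
      rw [Matrix.inv_def, Matrix.adjugate_fin_two, Ring.inverse_eq_inv']
    simp only [Wmap, hinv, Fin.sum_univ_two, Matrix.smul_apply, smul_eq_mul, Matrix.of_apply,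
      Matrix.cons_val', Matrix.cons_val_zero, Matrix.cons_val_one, Matrix.head_cons,
      Matrix.empty_val', Matrix.cons_val_fin_one, Matrix.head_fin_const]
    field_simp
    ring
  have huniq : ∀ c0 c1 : ℝ, (∀ i, c0 * vpd x 0 u i + c1 * vpd x 1 u i = 0) → c0 = 0 ∧ c1 = 0 := by
    intro c0 c1 hz
    have h0 := Fintype.linearIndependent_iff.mp (hind u hu) ![c0, c1] (by
      rw [Fin.sum_univ_two]
      funext i
      simpa using hz i)
    exact ⟨h0 0, h0 1⟩
  have hY : ∀ (b : Fin 2) (j : Fin (p + 2)), Smap ρ x N u (vpd x b u) j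
      = (1 / ρ u) * (vpd x 0 u j * dot (vpd N 1 u) (vpd x b u)
        - vpd x 1 u j * dot (vpd N 0 u) (vpd x b u)) := by
    intro b j
    calc Smap ρ x N u (vpd x b u) j
        = ∑ k, ((1 / ρ u) * (vpd x 0 u j * vpd N 1 u k - vpd x 1 u j * vpd N 0 u k))
            * vpd x b u k := rfl
      _ = (1 / ρ u) * (vpd x 0 u j * dot (vpd N 1 u) (vpd x b u)
            - vpd x 1 u j * dot (vpd N 0 u) (vpd x b u)) :=
        sum_pair'' (1 / ρ u) (vpd x 0 u j) (vpd x 1 u j) (vpd N 1 u) (vpd N 0 u) (vpd x b u)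
  have hBE : ∀ (b : Fin 2) (i : Fin (p + 2)), Bmap ρ x N u (vpd x b u) i
      = ((1 / ρ u) * (1 / ρ u) * (gmat x u 1 1 * hmat x N u b 0 - gmat x u 1 0 * hmat x N u b 1))
          * vpd x 0 u i
        + ((1 / ρ u) * (1 / ρ u) * (gmat x u 0 0 * hmat x N u b 1 - gmat x u 0 1 * hmat x N u b 0))
          * vpd x 1 u i := by
    intro b i
    calc Bmap ρ x N u (vpd x b u) i
        = ∑ j, ((1 / ρ u) * (vpd x 0 u i * vpd x 1 u j - vpd x 1 u i * vpd x 0 u j))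
            * Smap ρ x N u (vpd x b u) j := rfl
      _ = ∑ j, ((1 / ρ u) * (vpd x 0 u i * vpd x 1 u j - vpd x 1 u i * vpd x 0 u j))
            * ((1 / ρ u) * (dot (vpd N 1 u) (vpd x b u) * vpd x 0 u j
              - dot (vpd N 0 u) (vpd x b u) * vpd x 1 u j)) :=
          Finset.sum_congr rfl fun j _ => by rw [hY b j]; ring
      _ = (1 / ρ u) * (1 / ρ u) * (vpd x 0 u i * dot (vpd N 1 u) (vpd x b u)
            * dot (vpd x 1 u) (vpd x 0 u)
          - vpd x 0 u i * dot (vpd N 0 u) (vpd x b u) * dot (vpd x 1 u) (vpd x 1 u)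
          - vpd x 1 u i * dot (vpd N 1 u) (vpd x b u) * dot (vpd x 0 u) (vpd x 0 u)
          + vpd x 1 u i * dot (vpd N 0 u) (vpd x b u) * dot (vpd x 0 u) (vpd x 1 u)) :=
        sum_quad' (1 / ρ u) (1 / ρ u) (vpd x 0 u i) (vpd x 1 u i)
          (dot (vpd N 1 u) (vpd x b u)) (dot (vpd N 0 u) (vpd x b u))
          (vpd x 1 u) (vpd x 0 u) (vpd x 0 u) (vpd x 1 u)
      _ = _ := by rw [hME 1 b, hME 0 b, hG 1 0, hG 1 1, hG 0 0, hG 0 1]; ring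
  have hZ : ∀ (b : Fin 2) (j : Fin (p + 2)), STmap ρ x N u (vpd x b u) j
      = (1 / ρ u) * (dot (vpd x b u) (vpd x 0 u) * vpd N 1 u j
        - dot (vpd x b u) (vpd x 1 u) * vpd N 0 u j) := by
    intro b j
    calc STmap ρ x N u (vpd x b u) j
        = ∑ k, vpd x b u k * ((1 / ρ u) * (vpd x 0 u k * vpd N 1 u j
            - vpd x 1 u k * vpd N 0 u j)) := rfl
      _ = (1 / ρ u) * (dot (vpd x b u) (vpd x 0 u) * vpd N 1 u j
            - dot (vpd x b u) (vpd x 1 u) * vpd N 0 u j) :=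
        sum_pair_l' (1 / ρ u) (vpd N 1 u j) (vpd N 0 u j) (vpd x 0 u) (vpd x 1 u) (vpd x b u)
  have hAE : ∀ (b : Fin 2) (i : Fin (p + 2)), Amap ρ x N u (vpd x b u) i
      = ((1 / ρ u) * (1 / ρ u) * (gmat x u b 0 * hmat x N u 1 1 - gmat x u b 1 * hmat x N u 1 0))
          * vpd x 0 u i
        + ((1 / ρ u) * (1 / ρ u) * (gmat x u b 1 * hmat x N u 0 0 - gmat x u b 0 * hmat x N u 0 1))
          * vpd x 1 u i := by
    intro b i
    have hP : Pmap ρ x u (STmap ρ x N u (vpd x b u)) i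
        = (1 / ρ u) * (1 / ρ u) * (vpd x 0 u i * dot (vpd x b u) (vpd x 0 u)
            * dot (vpd x 1 u) (vpd N 1 u)
          - vpd x 0 u i * dot (vpd x b u) (vpd x 1 u) * dot (vpd x 1 u) (vpd N 0 u)
          - vpd x 1 u i * dot (vpd x b u) (vpd x 0 u) * dot (vpd x 0 u) (vpd N 1 u)
          + vpd x 1 u i * dot (vpd x b u) (vpd x 1 u) * dot (vpd x 0 u) (vpd N 0 u)) := by
      calc Pmap ρ x u (STmap ρ x N u (vpd x b u)) i
          = ∑ j, ((1 / ρ u) * (vpd x 0 u i * vpd x 1 u j - vpd x 1 u i * vpd x 0 u j))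
              * STmap ρ x N u (vpd x b u) j := rfl
        _ = ∑ j, ((1 / ρ u) * (vpd x 0 u i * vpd x 1 u j - vpd x 1 u i * vpd x 0 u j))
              * ((1 / ρ u) * (dot (vpd x b u) (vpd x 0 u) * vpd N 1 u j
                - dot (vpd x b u) (vpd x 1 u) * vpd N 0 u j)) :=
            Finset.sum_congr rfl fun j _ => by rw [hZ b j]
        _ = _ :=
          sum_quad' (1 / ρ u) (1 / ρ u) (vpd x 0 u i) (vpd x 1 u i)
            (dot (vpd x b u) (vpd x 0 u)) (dot (vpd x b u) (vpd x 1 u))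
            (vpd x 1 u) (vpd x 0 u) (vpd N 1 u) (vpd N 0 u)
    calc Amap ρ x N u (vpd x b u) i = -(Pmap ρ x u (STmap ρ x N u (vpd x b u)) i) := rfl
      _ = _ := by
        rw [hP, hHd 1 1, hHd 1 0, hHd 0 1, hHd 0 0, hG b 0, hG b 1]; ring
  refine ⟨?_, ?_, ?_, ?_⟩
  · rw [key]
    have step : ∀ i j : Fin (p + 2),
        pb ρ (fun v => x v i) (fun v => x v j) u * pb ρ (fun v => x v j) (fun v => N v i) u
        = ((1 / ρ u) * (1 / ρ u)) * ((vpd x 0 u i * vpd x 1 u j) * (vpd x 0 u j * vpd N 1 u i))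
          - ((1 / ρ u) * (1 / ρ u)) * ((vpd x 0 u i * vpd x 1 u j) * (vpd x 1 u j * vpd N 0 u i))
          - ((1 / ρ u) * (1 / ρ u)) * ((vpd x 1 u i * vpd x 0 u j) * (vpd x 0 u j * vpd N 1 u i))
          + ((1 / ρ u) * (1 / ρ u)) * ((vpd x 1 u i * vpd x 0 u j) * (vpd x 1 u j * vpd N 0 u i)) := by
      intro i j
      show ((1 / ρ u) * (vpd x 0 u i * vpd x 1 u j - vpd x 1 u i * vpd x 0 u j))
        * ((1 / ρ u) * (vpd x 0 u j * vpd N 1 u i - vpd x 1 u j * vpd N 0 u i)) = _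
      ring
    calc ∑ i, ∑ j, pb ρ (fun v => x v i) (fun v => x v j) u
          * pb ρ (fun v => x v j) (fun v => N v i) u
        = ∑ i, ∑ j,
          (((1 / ρ u) * (1 / ρ u)) * ((vpd x 0 u i * vpd x 1 u j) * (vpd x 0 u j * vpd N 1 u i))
          - ((1 / ρ u) * (1 / ρ u)) * ((vpd x 0 u i * vpd x 1 u j) * (vpd x 1 u j * vpd N 0 u i))
          - ((1 / ρ u) * (1 / ρ u)) * ((vpd x 1 u i * vpd x 0 u j) * (vpd x 0 u j * vpd N 1 u i))
          + ((1 / ρ u) * (1 / ρ u)) * ((vpd x 1 u i * vpd x 0 u j) * (vpd x 1 u j * vpd N 0 u i))) :=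
          Finset.sum_congr rfl fun i _ => Finset.sum_congr rfl fun j _ => step i j
      _ = ((1 / ρ u) * (1 / ρ u)) * (dot (vpd x 0 u) (vpd N 1 u) * dot (vpd x 1 u) (vpd x 0 u))
          - ((1 / ρ u) * (1 / ρ u)) * (dot (vpd x 0 u) (vpd N 0 u) * dot (vpd x 1 u) (vpd x 1 u))
          - ((1 / ρ u) * (1 / ρ u)) * (dot (vpd x 1 u) (vpd N 1 u) * dot (vpd x 0 u) (vpd x 0 u))
          + ((1 / ρ u) * (1 / ρ u)) * (dot (vpd x 1 u) (vpd N 0 u) * dot (vpd x 0 u) (vpd x 1 u)) := by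
          simp only [Finset.sum_sub_distrib, Finset.sum_add_distrib, expc1']
      _ = _ := by
          rw [hHd 0 1, hHd 0 0, hHd 1 1, hHd 1 0, hG 1 0, hG 1 1, hG 0 0, hG 0 1]; ring
  · rw [key]
    have step : ∀ i j : Fin (p + 2),
        pb ρ (fun v => x v i) (fun v => x v j) u * pb ρ (fun v => x v i) (fun v => N v j) u
        = ((1 / ρ u) * (1 / ρ u)) * ((vpd x 0 u i * vpd x 1 u j) * (vpd x 0 u i * vpd N 1 u j))
          - ((1 / ρ u) * (1 / ρ u)) * ((vpd x 0 u i * vpd x 1 u j) * (vpd x 1 u i * vpd N 0 u j))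
          - ((1 / ρ u) * (1 / ρ u)) * ((vpd x 1 u i * vpd x 0 u j) * (vpd x 0 u i * vpd N 1 u j))
          + ((1 / ρ u) * (1 / ρ u)) * ((vpd x 1 u i * vpd x 0 u j) * (vpd x 1 u i * vpd N 0 u j)) := by
      intro i j
      show ((1 / ρ u) * (vpd x 0 u i * vpd x 1 u j - vpd x 1 u i * vpd x 0 u j))
        * ((1 / ρ u) * (vpd x 0 u i * vpd N 1 u j - vpd x 1 u i * vpd N 0 u j)) = _
      ring
    have hmain : ∑ i, ∑ j, pb ρ (fun v => x v i) (fun v => x v j) u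
          * pb ρ (fun v => x v i) (fun v => N v j) u
        = ((1 / ρ u) * (1 / ρ u)) * (dot (vpd x 0 u) (vpd x 0 u) * dot (vpd x 1 u) (vpd N 1 u))
          - ((1 / ρ u) * (1 / ρ u)) * (dot (vpd x 0 u) (vpd x 1 u) * dot (vpd x 1 u) (vpd N 0 u))
          - ((1 / ρ u) * (1 / ρ u)) * (dot (vpd x 1 u) (vpd x 0 u) * dot (vpd x 0 u) (vpd N 1 u))
          + ((1 / ρ u) * (1 / ρ u)) * (dot (vpd x 1 u) (vpd x 1 u) * dot (vpd x 0 u) (vpd N 0 u)) := by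
      calc ∑ i, ∑ j, pb ρ (fun v => x v i) (fun v => x v j) u
            * pb ρ (fun v => x v i) (fun v => N v j) u
          = ∑ i, ∑ j,
            (((1 / ρ u) * (1 / ρ u)) * ((vpd x 0 u i * vpd x 1 u j) * (vpd x 0 u i * vpd N 1 u j))
            - ((1 / ρ u) * (1 / ρ u)) * ((vpd x 0 u i * vpd x 1 u j) * (vpd x 1 u i * vpd N 0 u j))
            - ((1 / ρ u) * (1 / ρ u)) * ((vpd x 1 u i * vpd x 0 u j) * (vpd x 0 u i * vpd N 1 u j))
            + ((1 / ρ u) * (1 / ρ u)) * ((vpd x 1 u i * vpd x 0 u j) * (vpd x 1 u i * vpd N 0 u j))) :=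
            Finset.sum_congr rfl fun i _ => Finset.sum_congr rfl fun j _ => step i j
        _ = _ := by
            simp only [Finset.sum_sub_distrib, Finset.sum_add_distrib, expc2']
    rw [hmain, hHd 1 1, hHd 1 0, hHd 0 1, hHd 0 0, hG 0 0, hG 0 1, hG 1 0, hG 1 1]; ring
  · intro Bc hBc
    have hcoef : ∀ b : Fin 2,
        Bc 0 b = (1 / ρ u) * (1 / ρ u)
            * (gmat x u 1 1 * hmat x N u b 0 - gmat x u 1 0 * hmat x N u b 1)
        ∧ Bc 1 b = (1 / ρ u) * (1 / ρ u)
            * (gmat x u 0 0 * hmat x N u b 1 - gmat x u 0 1 * hmat x N u b 0) := by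
      intro b
      have hz : ∀ i, (Bc 0 b - (1 / ρ u) * (1 / ρ u)
            * (gmat x u 1 1 * hmat x N u b 0 - gmat x u 1 0 * hmat x N u b 1)) * vpd x 0 u i
          + (Bc 1 b - (1 / ρ u) * (1 / ρ u)
            * (gmat x u 0 0 * hmat x N u b 1 - gmat x u 0 1 * hmat x N u b 0)) * vpd x 1 u i
          = 0 := by
        intro i
        have h1 := hBc b i
        rw [Fin.sum_univ_two] at h1
        have h2 := hBE b i
        rw [h2] at h1
        linarith [h1]
      obtain ⟨e0, e1⟩ := huniq _ _ hz
      constructor <;> linarith [e0, e1]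
    rw [Fin.sum_univ_two, (hcoef 0).1, (hcoef 1).2, key]; ring
  · intro Ac hAc
    have hcoef : ∀ b : Fin 2,
        Ac 0 b = (1 / ρ u) * (1 / ρ u)
            * (gmat x u b 0 * hmat x N u 1 1 - gmat x u b 1 * hmat x N u 1 0)
        ∧ Ac 1 b = (1 / ρ u) * (1 / ρ u)
            * (gmat x u b 1 * hmat x N u 0 0 - gmat x u b 0 * hmat x N u 0 1) := by
      intro b
      have hz : ∀ i, (Ac 0 b - (1 / ρ u) * (1 / ρ u)
            * (gmat x u b 0 * hmat x N u 1 1 - gmat x u b 1 * hmat x N u 1 0)) * vpd x 0 u i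
          + (Ac 1 b - (1 / ρ u) * (1 / ρ u)
            * (gmat x u b 1 * hmat x N u 0 0 - gmat x u b 0 * hmat x N u 0 1)) * vpd x 1 u i
          = 0 := by
        intro i
        have h1 := hAc b i
        rw [Fin.sum_univ_two] at h1
        have h2 := hAE b i
        rw [h2] at h1
        linarith [h1]
      obtain ⟨e0, e1⟩ := huniq _ _ hz
      constructor <;> linarith [e0, e1]
    rw [Fin.sum_univ_two, (hcoef 0).1, (hcoef 1).2, key]; ring
end

section
/- The trace of P² equals −2g/ρ²: Σ_{i,j} {x^i, x^j}{x^j, x^i} = −2g/ρ² at every point of U. -/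
open scoped BigOperators

theorem statement8 (U : Set (ℝ × ℝ)) (hU : IsOpen U) (p : ℕ) (hp : 1 ≤ p)
    (ρ : ℝ × ℝ → ℝ) (hρ : ContDiffOn ℝ (⊤ : ℕ∞) ρ U) (hρ0 : ∀ u ∈ U, ρ u ≠ 0)
    (x : ℝ × ℝ → Fin (p + 2) → ℝ) (hx : ContDiffOn ℝ (⊤ : ℕ∞) x U)
    (hind : ∀ u ∈ U, LinearIndependent ℝ ![vpd x 0 u, vpd x 1 u])
    (hg : ∀ u ∈ U, 0 < (gmat x u).det) :
    ∀ u ∈ U,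
      ∑ i, ∑ j, pb ρ (fun v => x v i) (fun v => x v j) u * pb ρ (fun v => x v j) (fun v => x v i) u
        = -(2 * (gmat x u).det / (ρ u) ^ 2) := by

  intro u hu
  classical
  set A : Fin (p + 2) → ℝ := fun i => pd 0 (fun v => x v i) u with hA
  set B : Fin (p + 2) → ℝ := fun i => pd 1 (fun v => x v i) u with hB
  have hterm : ∀ i j : Fin (p + 2),
      pb ρ (fun v => x v i) (fun v => x v j) u * pb ρ (fun v => x v j) (fun v => x v i) u
        = (1 / ρ u)^2 * (2 * (A i * B i) * (A j * B j) - (A i * A i) * (B j * B j)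
            - (B i * B i) * (A j * A j)) := by
    intro i j
    simp only [pb, hA, hB]
    ring
  simp only [hterm, ← Finset.mul_sum]
  have h1 : ∀ i : Fin (p + 2),
      ∑ j, (2 * (A i * B i) * (A j * B j) - (A i * A i) * (B j * B j)
          - (B i * B i) * (A j * A j))
        = 2 * (A i * B i) * (∑ j, A j * B j) - (A i * A i) * (∑ j, B j * B j)
          - (B i * B i) * (∑ j, A j * A j) := by
    intro i
    rw [Finset.sum_sub_distrib, Finset.sum_sub_distrib, ← Finset.mul_sum, ← Finset.mul_sum,
      ← Finset.mul_sum]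
  simp only [h1]
  rw [Finset.sum_sub_distrib, Finset.sum_sub_distrib, ← Finset.sum_mul, ← Finset.sum_mul,
    ← Finset.sum_mul]
  have hdet : (gmat x u).det = (∑ i, A i * A i) * (∑ i, B i * B i) - (∑ i, A i * B i)^2 := by
    rw [Matrix.det_fin_two]
    simp only [gmat, dot, vpd, Matrix.of_apply, hA, hB]
    have : ∀ i : Fin (p + 2), B i * A i = A i * B i := fun i => mul_comm _ _
    simp only [mul_comm (pd 1 _ u) (pd 0 _ u)]
    ring
  rw [hdet]
  have hρu := hρ0 u hu
  field_simp
  simp only [mul_assoc (2:ℝ), ← Finset.mul_sum]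
  ring
end

section
/- The Gaussian curvature of a surface in flat Euclidean space equals a Poisson-algebraic expression in the embedding coordinates and the normal fields: with K := (1/g) Σ_{A=1}^p det(h_{A,ab}) (the Gaussian curvature of Σ, given by the Gauss equation in ℝ^m), one has K = −(ρ²/(2g)) Σ_{A=1}^p Σ_{i,j=1}^m {x^i, N_A^j}{x^j, N_A^i} at every point of U. -/
open scoped BigOperators

section Aux

lemma pd_mul {f g : ℝ × ℝ → ℝ} {u : ℝ × ℝ} (a : Fin 2)
    (hf : DifferentiableAt ℝ f u) (hg : DifferentiableAt ℝ g u) :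
    pd a (fun v => f v * g v) u = pd a f u * g u + f u * pd a g u := by
  unfold pd
  rw [fderiv_fun_mul hf hg]
  simp only [ContinuousLinearMap.add_apply, ContinuousLinearMap.smul_apply, smul_eq_mul]
  ring

lemma pd_sum {m : ℕ} {f : Fin m → ℝ × ℝ → ℝ} {u : ℝ × ℝ} (a : Fin 2)
    (hf : ∀ i, DifferentiableAt ℝ (f i) u) :
    pd a (fun v => ∑ i, f i v) u = ∑ i, pd a (f i) u := by
  unfold pd
  rw [fderiv_fun_sum (fun i _ => hf i)]
  simp

lemma pd_eq_zero_of_eqOn_zero {f : ℝ × ℝ → ℝ} {U : Set (ℝ × ℝ)} (hU : IsOpen U)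
    {u : ℝ × ℝ} (hu : u ∈ U) (hf : ∀ v ∈ U, f v = 0) (a : Fin 2) : pd a f u = 0 := by
  have h : f =ᶠ[nhds u] fun _ => (0 : ℝ) :=
    Filter.eventuallyEq_of_mem (hU.mem_nhds hu) hf
  unfold pd
  rw [h.fderiv_eq, fderiv_fun_const]
  simp

lemma pd_comm {f : ℝ × ℝ → ℝ} {u : ℝ × ℝ} (hf : ContDiffAt ℝ (⊤ : ℕ∞) f u) :
    pd 1 (fun v => pd 0 f v) u = pd 0 (fun v => pd 1 f v) u := by
  have hdf : DifferentiableAt ℝ (fderiv ℝ f) u :=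
    (hf.fderiv_right (m := 1) (by exact WithTop.coe_le_coe.mpr le_top)).differentiableAt one_ne_zero
  have hsymm := hf.isSymmSndFDerivAt (by simp; exact WithTop.coe_le_coe.mpr le_top)
  have hcalc : ∀ a b : Fin 2, pd b (fun v => pd a f v) u =
      fderiv ℝ (fderiv ℝ f) u (if b = 0 then ((1:ℝ), (0:ℝ)) else (0, 1))
        (if a = 0 then ((1:ℝ),(0:ℝ)) else (0, 1)) := by
    intro a b
    show fderiv ℝ (fun v => fderiv ℝ f v _) u _ = _
    rw [fderiv_clm_apply hdf (differentiableAt_const _)]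
    simp
  rw [hcalc, hcalc, hsymm]

lemma alg {m : ℕ} (a b c d : Fin m → ℝ) :
    ∑ i, ∑ j, (a i * b j - c i * d j) * (a j * b i - c j * d i)
      = dot a b * dot a b + dot c d * dot c d - 2 * (dot a d * dot c b) := by
  have h1 : dot a b * dot a b = ∑ i, ∑ j, (a i * b i) * (a j * b j) :=
    Finset.sum_mul_sum _ _ _ _
  have h2 : dot c d * dot c d = ∑ i, ∑ j, (c i * d i) * (c j * d j) :=
    Finset.sum_mul_sum _ _ _ _
  have h3 : dot a d * dot c b = ∑ i, ∑ j, (a i * d i) * (c j * b j) :=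
    Finset.sum_mul_sum _ _ _ _
  have h4 : dot c b * dot a d = ∑ i, ∑ j, (c i * b i) * (a j * d j) :=
    Finset.sum_mul_sum _ _ _ _
  have h5 : 2 * (dot a d * dot c b) = dot a d * dot c b + dot c b * dot a d := by ring
  rw [h5, h1, h2, h3, h4]
  simp only [← Finset.sum_add_distrib, ← Finset.sum_sub_distrib]
  exact Finset.sum_congr rfl fun i _ => Finset.sum_congr rfl fun j _ => by ring

end Aux

theorem statement9 (U : Set (ℝ × ℝ)) (hU : IsOpen U) (p : ℕ) (hp : 1 ≤ p)
    (ρ : ℝ × ℝ → ℝ) (hρ : ContDiffOn ℝ (⊤ : ℕ∞) ρ U) (hρ0 : ∀ u ∈ U, ρ u ≠ 0)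
    (x : ℝ × ℝ → Fin (p + 2) → ℝ) (hx : ContDiffOn ℝ (⊤ : ℕ∞) x U)
    (hind : ∀ u ∈ U, LinearIndependent ℝ ![vpd x 0 u, vpd x 1 u])
    (hg : ∀ u ∈ U, 0 < (gmat x u).det)
    (N : Fin p → ℝ × ℝ → Fin (p + 2) → ℝ) (hN : ∀ A, ContDiffOn ℝ (⊤ : ℕ∞) (N A) U)
    (hNt : ∀ u ∈ U, ∀ A, ∀ a : Fin 2, dot (N A u) (vpd x a u) = 0)
    (hNo : ∀ u ∈ U, ∀ A B, dot (N A u) (N B u) = if A = B then 1 else 0) :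
    ∀ u ∈ U,
      (1 / (gmat x u).det) * ∑ A, (hmat x (N A) u).det =
        -((ρ u) ^ 2 / (2 * (gmat x u).det)) *
          ∑ A, ∑ i, ∑ j,
            pb ρ (fun v => x v i) (fun v => N A v j) u *
              pb ρ (fun v => x v j) (fun v => N A v i) u := by

  intro u hu
  have hgne : (gmat x u).det ≠ 0 := (hg u hu).ne'
  have hρu : ρ u ≠ 0 := hρ0 u hu
  have hxC : ∀ i, ContDiffAt ℝ (⊤ : ℕ∞) (fun v => x v i) u :=
    fun i => contDiffAt_pi.mp (hx.contDiffAt (hU.mem_nhds hu)) i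
  have hxPC : ∀ (a : Fin 2) (i : Fin (p + 2)),
      ContDiffAt ℝ (⊤ : ℕ∞) (fun v => pd a (fun w => x w i) v) u := by
    intro a i
    exact ((hxC i).fderiv_right (m := (⊤ : ℕ∞)) (by simp)).clm_apply contDiffAt_const
  have symm : ∀ A, dot (vpd x 0 u) (vpd (N A) 1 u) = dot (vpd x 1 u) (vpd (N A) 0 u) := by
    intro A
    have hNCi : ∀ i, ContDiffAt ℝ (⊤ : ℕ∞) (fun v => N A v i) u :=
      fun i => contDiffAt_pi.mp ((hN A).contDiffAt (hU.mem_nhds hu)) i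
    have key : ∀ a b : Fin 2,
        (∑ i, (pd b (fun v => N A v i) u * pd a (fun w => x w i) u
          + N A u i * pd b (fun v => pd a (fun w => x w i) v) u)) = 0 := by
      intro a b
      have hz : pd b (fun v => ∑ i, N A v i * pd a (fun w => x w i) v) u = 0 :=
        pd_eq_zero_of_eqOn_zero hU hu (fun v hv => hNt v hv A a) b
      rw [← hz,
        pd_sum (f := fun i v => N A v i * pd a (fun w => x w i) v) b (fun i => ((hNCi i).differentiableAt (by simp)).mul
          ((hxPC a i).differentiableAt (by simp)))]
      exact Finset.sum_congr rfl fun i _ =>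
        (pd_mul b ((hNCi i).differentiableAt (by simp))
          ((hxPC a i).differentiableAt (by simp))).symm
    have k1 := key 0 1
    have k2 := key 1 0
    have hc : ∀ i : Fin (p + 2),
        pd 1 (fun v => pd 0 (fun w => x w i) v) u
          = pd 0 (fun v => pd 1 (fun w => x w i) v) u := fun i => pd_comm (hxC i)
    rw [Finset.sum_add_distrib] at k1 k2
    simp only [hc] at k1
    have hkey : ∑ i, pd 1 (fun v => N A v i) u * pd 0 (fun w => x w i) u
        = ∑ i, pd 0 (fun v => N A v i) u * pd 1 (fun w => x w i) u := by linarith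
    simp only [dot, vpd]
    calc ∑ i, pd 0 (fun v => x v i) u * pd 1 (fun v => N A v i) u
        = ∑ i, pd 1 (fun v => N A v i) u * pd 0 (fun w => x w i) u :=
          Finset.sum_congr rfl fun i _ => mul_comm _ _
      _ = ∑ i, pd 0 (fun v => N A v i) u * pd 1 (fun w => x w i) u := hkey
      _ = ∑ i, pd 1 (fun v => x v i) u * pd 0 (fun v => N A v i) u :=
          Finset.sum_congr rfl fun i _ => mul_comm _ _
  rw [Finset.mul_sum, Finset.mul_sum]
  refine Finset.sum_congr rfl fun A _ => ?_
  have hdet : (hmat x (N A) u).det =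
      dot (vpd x 0 u) (vpd (N A) 0 u) * dot (vpd x 1 u) (vpd (N A) 1 u)
        - dot (vpd x 0 u) (vpd (N A) 1 u) * dot (vpd x 1 u) (vpd (N A) 0 u) := by
    rw [Matrix.det_fin_two]
    simp only [hmat, Matrix.of_apply]
    ring
  have hpb : ∀ i j : Fin (p + 2),
      pb ρ (fun v => x v i) (fun v => N A v j) u * pb ρ (fun v => x v j) (fun v => N A v i) u
        = (1 / ρ u) ^ 2 * ((vpd x 0 u i * vpd (N A) 1 u j - vpd x 1 u i * vpd (N A) 0 u j)
            * (vpd x 0 u j * vpd (N A) 1 u i - vpd x 1 u j * vpd (N A) 0 u i)) := by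
    intro i j
    simp only [pb, vpd]
    ring
  have hsum : ∑ i, ∑ j,
      pb ρ (fun v => x v i) (fun v => N A v j) u * pb ρ (fun v => x v j) (fun v => N A v i) u
        = (1 / ρ u) ^ 2 * (dot (vpd x 0 u) (vpd (N A) 1 u) * dot (vpd x 0 u) (vpd (N A) 1 u)
            + dot (vpd x 1 u) (vpd (N A) 0 u) * dot (vpd x 1 u) (vpd (N A) 0 u)
            - 2 * (dot (vpd x 0 u) (vpd (N A) 0 u) * dot (vpd x 1 u) (vpd (N A) 1 u))) := by
    simp only [hpb, ← Finset.mul_sum]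
    rw [alg]
  rw [hdet, hsum, symm A]
  field_simp
  ring
end

section
/- The mean curvature vector of a surface in flat Euclidean space equals a Poisson-algebraic expression in the embedding coordinates and the normal fields: with H := (1/2) Σ_{A=1}^p (Σ_a W_A{}^a_a) N_A ∈ ℝ^m (the mean curvature vector of Σ), one has, for every component k ∈ {1,…,m}, H^k = (ρ²/(2g)) Σ_{A=1}^p Σ_{i,j=1}^m {x^i, x^j}{x^j, N_A^i} N_A^k at every point of U. -/
open scoped BigOperators

lemma double_sum' {m : ℕ} (e0 e1 n0 n1 : Fin m → ℝ) :
    ∑ i, ∑ j, (e0 i * e1 j - e1 i * e0 j) * (e0 j * n1 i - e1 j * n0 i)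
      = dot e1 e0 * dot e0 n1 - dot e1 e1 * dot e0 n0
        - dot e0 e0 * dot e1 n1 + dot e0 e1 * dot e1 n0 := by
  have h1 : ∀ i : Fin m, ∑ j, (e0 i * e1 j - e1 i * e0 j) * (e0 j * n1 i - e1 j * n0 i)
      = dot e1 e0 * (e0 i * n1 i) - dot e1 e1 * (e0 i * n0 i)
        - dot e0 e0 * (e1 i * n1 i) + dot e0 e1 * (e1 i * n0 i) := by
    intro i
    simp only [dot, Finset.sum_mul, Finset.mul_sum, ← Finset.sum_add_distrib,
      ← Finset.sum_sub_distrib]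
    apply Finset.sum_congr rfl
    intro j _
    ring
  simp_rw [h1]
  simp only [dot, Finset.mul_sum, ← Finset.sum_add_distrib, ← Finset.sum_sub_distrib]

theorem statement10 (U : Set (ℝ × ℝ)) (hU : IsOpen U) (p : ℕ) (hp : 1 ≤ p)
    (ρ : ℝ × ℝ → ℝ) (hρ : ContDiffOn ℝ (⊤ : ℕ∞) ρ U) (hρ0 : ∀ u ∈ U, ρ u ≠ 0)
    (x : ℝ × ℝ → Fin (p + 2) → ℝ) (hx : ContDiffOn ℝ (⊤ : ℕ∞) x U)
    (hind : ∀ u ∈ U, LinearIndependent ℝ ![vpd x 0 u, vpd x 1 u])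
    (hg : ∀ u ∈ U, 0 < (gmat x u).det)
    (N : Fin p → ℝ × ℝ → Fin (p + 2) → ℝ) (hN : ∀ A, ContDiffOn ℝ (⊤ : ℕ∞) (N A) U)
    (hNt : ∀ u ∈ U, ∀ A, ∀ a : Fin 2, dot (N A u) (vpd x a u) = 0)
    (hNo : ∀ u ∈ U, ∀ A B, dot (N A u) (N B u) = if A = B then 1 else 0) :
    ∀ u ∈ U, ∀ k : Fin (p + 2),
      (1 / 2) * ∑ A, (∑ a, Wmap x (N A) u a a) * N A u k =
        ((ρ u) ^ 2 / (2 * (gmat x u).det)) *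
          ∑ A, ∑ i, ∑ j,
            pb ρ (fun v => x v i) (fun v => x v j) u *
              pb ρ (fun v => x v j) (fun v => N A v i) u * N A u k := by
  intro u hu k
  have hρu : ρ u ≠ 0 := hρ0 u hu
  have hdet : (gmat x u).det ≠ 0 := ne_of_gt (hg u hu)
  rw [Finset.mul_sum, Finset.mul_sum]
  apply Finset.sum_congr rfl
  intro A _
  have hpull : ∑ i, ∑ j,
      pb ρ (fun v => x v i) (fun v => x v j) u *
        pb ρ (fun v => x v j) (fun v => N A v i) u * N A u k
      = (∑ i, ∑ j, pb ρ (fun v => x v i) (fun v => x v j) u *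
          pb ρ (fun v => x v j) (fun v => N A v i) u) * N A u k := by
    rw [Finset.sum_mul]
    apply Finset.sum_congr rfl
    intro i _
    rw [Finset.sum_mul]
  rw [hpull, ← mul_assoc, ← mul_assoc]
  congr 1
  have hpb : ∀ i j : Fin (p + 2), pb ρ (fun v => x v i) (fun v => x v j) u *
      pb ρ (fun v => x v j) (fun v => N A v i) u
      = (1 / ρ u) * (1 / ρ u) *
        ((vpd x 0 u i * vpd x 1 u j - vpd x 1 u i * vpd x 0 u j) *
         (vpd x 0 u j * vpd (N A) 1 u i - vpd x 1 u j * vpd (N A) 0 u i)) := by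
    intro i j
    simp only [pb, vpd]
    ring
  simp_rw [hpb, ← Finset.mul_sum]
  rw [double_sum' (vpd x 0 u) (vpd x 1 u) (vpd (N A) 0 u) (vpd (N A) 1 u)]
  have key : ∀ D : ℝ, ((ρ u) ^ 2 / (2 * (gmat x u).det)) * ((1 / ρ u) * (1 / ρ u) * D)
      = D / (2 * (gmat x u).det) := by
    intro D; field_simp
  rw [key]
  have hGinv : (gmat x u)⁻¹ = ((gmat x u).det)⁻¹ •
      Matrix.of ![![gmat x u 1 1, -(gmat x u 0 1)], ![-(gmat x u 1 0), gmat x u 0 0]] := by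
    rw [Matrix.inv_def, Matrix.adjugate_fin_two, Ring.inverse_eq_inv]
  have hdet' : dot (vpd x 0 u) (vpd x 0 u) * dot (vpd x 1 u) (vpd x 1 u)
      - dot (vpd x 0 u) (vpd x 1 u) * dot (vpd x 1 u) (vpd x 0 u) ≠ 0 := by
    rw [Matrix.det_fin_two] at hdet
    simpa [gmat] using hdet
  have htr : ∑ a, Wmap x (N A) u a a = ((gmat x u).det)⁻¹ *
      (gmat x u 1 1 * hmat x (N A) u 0 0 - gmat x u 0 1 * hmat x (N A) u 1 0
        - gmat x u 1 0 * hmat x (N A) u 0 1 + gmat x u 0 0 * hmat x (N A) u 1 1) := by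
    simp only [Wmap, Fin.sum_univ_two, hGinv, Matrix.smul_apply, Matrix.of_apply,
      Matrix.cons_val', Matrix.cons_val_zero, Matrix.cons_val_one, Matrix.head_cons,
      Matrix.empty_val', Matrix.cons_val_fin_one, Matrix.head_fin_const, smul_eq_mul]
    ring
  have hdetval : (gmat x u).det = dot (vpd x 0 u) (vpd x 0 u) * dot (vpd x 1 u) (vpd x 1 u)
      - dot (vpd x 0 u) (vpd x 1 u) * dot (vpd x 1 u) (vpd x 0 u) := by
    rw [Matrix.det_fin_two]; rfl
  have hgab : ∀ a b : Fin 2, gmat x u a b = dot (vpd x a u) (vpd x b u) := fun a b => rfl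
  have hhab : ∀ a b : Fin 2, hmat x (N A) u a b = -(dot (vpd x a u) (vpd (N A) b u)) :=
    fun a b => rfl
  rw [htr, hdetval, hgab, hgab, hgab, hgab, hhab, hhab, hhab, hhab]
  field_simp
  ring
end

section
/- The normal covariant derivative is encoded by the maps B_A: for every tangent vector X = Σ_a X^a e_a and all A, B ∈ {1,…,p}, ⟨B_A(N_B), X⟩ = (g/ρ²) ⟨N_A, Σ_a X^a ∂N_B/∂u^a⟩; the right-hand side is (g/ρ²) times the component (D_X)_{AB} of the normal connection with respect to the frame N_1,…,N_p. -/
open scoped BigOperators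

theorem statement11 (U : Set (ℝ × ℝ)) (hU : IsOpen U) (p : ℕ) (hp : 1 ≤ p)
    (ρ : ℝ × ℝ → ℝ) (hρ : ContDiffOn ℝ (⊤ : ℕ∞) ρ U) (hρ0 : ∀ u ∈ U, ρ u ≠ 0)
    (x : ℝ × ℝ → Fin (p + 2) → ℝ) (hx : ContDiffOn ℝ (⊤ : ℕ∞) x U)
    (hind : ∀ u ∈ U, LinearIndependent ℝ ![vpd x 0 u, vpd x 1 u])
    (hg : ∀ u ∈ U, 0 < (gmat x u).det)
    (N : Fin p → ℝ × ℝ → Fin (p + 2) → ℝ) (hN : ∀ A, ContDiffOn ℝ (⊤ : ℕ∞) (N A) U)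
    (hNt : ∀ u ∈ U, ∀ A, ∀ a : Fin 2, dot (N A u) (vpd x a u) = 0)
    (hNo : ∀ u ∈ U, ∀ A B, dot (N A u) (N B u) = if A = B then 1 else 0) :
    ∀ u ∈ U, ∀ X : Fin 2 → ℝ, ∀ A B : Fin p,
      dot (Bmap ρ x (N A) u (N B u)) (fun j => ∑ a, X a * vpd x a u j) =
        ((gmat x u).det / (ρ u) ^ 2) *
          dot (N A u) (fun j => ∑ a, X a * vpd (N B) a u j) := by
  intro u hu X A B
  have hrne : ρ u ≠ 0 := hρ0 u hu
  -- key derivative fact: D a + E a = 0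
  have hDE : ∀ a : Fin 2, (∑ l, vpd (N A) a u l * N B u l)
      + (∑ l, N A u l * vpd (N B) a u l) = 0 := by
    intro a
    have hdAi : ∀ i, DifferentiableAt ℝ (fun v => N A v i) u := fun i =>
      (differentiableAt_pi.mp (((hN A).differentiableOn (by simp)).differentiableAt
        (hU.mem_nhds hu))) i
    have hdBi : ∀ i, DifferentiableAt ℝ (fun v => N B v i) u := fun i =>
      (differentiableAt_pi.mp (((hN B).differentiableOn (by simp)).differentiableAt
        (hU.mem_nhds hu))) i
    have hev : (fun v => ∑ i, N A v i * N B v i)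
        =ᶠ[nhds u] fun _ => (if A = B then (1:ℝ) else 0) := by
      filter_upwards [hU.mem_nhds hu] with v hv
      exact hNo v hv A B
    have hfd : fderiv ℝ (fun v => ∑ i, N A v i * N B v i) u = 0 := by
      rw [hev.fderiv_eq]; exact fderiv_const_apply _
    have hfs : fderiv ℝ (fun v => ∑ i, N A v i * N B v i) u
        = ∑ i, fderiv ℝ (fun v => N A v i * N B v i) u :=
      fderiv_fun_sum fun i _ => (hdAi i).mul (hdBi i)
    have happ : (0:ℝ) = ∑ i, (fderiv ℝ (fun v => N A v i * N B v i) u)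
        (if a = 0 then (1,0) else (0,1)) := by
      rw [← ContinuousLinearMap.sum_apply, ← hfs, hfd]; rfl
    have hmul : ∀ i, (fderiv ℝ (fun v => N A v i * N B v i) u)
        (if a = 0 then ((1:ℝ),(0:ℝ)) else (0,1))
        = vpd (N A) a u i * N B u i + N A u i * vpd (N B) a u i := by
      intro i
      rw [fderiv_fun_mul (hdAi i) (hdBi i)]
      simp only [ContinuousLinearMap.add_apply, ContinuousLinearMap.smul_apply,
        smul_eq_mul]
      show N A u i * pd a (fun v => N B v i) u + N B u i * pd a (fun v => N A v i) u = _
      simp only [vpd]; ring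
    have : (0:ℝ) = ∑ i, (vpd (N A) a u i * N B u i + N A u i * vpd (N B) a u i) := by
      rw [happ]; exact Finset.sum_congr rfl fun i _ => hmul i
    rw [Finset.sum_add_distrib] at this
    linarith
  -- abbreviations
  set e0 : Fin (p+2) → ℝ := vpd x 0 u with he0
  set e1 : Fin (p+2) → ℝ := vpd x 1 u with he1
  set D0 : ℝ := ∑ l, vpd (N A) 0 u l * N B u l with hD0
  set D1 : ℝ := ∑ l, vpd (N A) 1 u l * N B u l with hD1
  set E0 : ℝ := ∑ l, N A u l * vpd (N B) 0 u l with hE0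
  set E1 : ℝ := ∑ l, N A u l * vpd (N B) 1 u l with hE1
  set G00 : ℝ := ∑ k, e0 k * e0 k with hG00
  set G01 : ℝ := ∑ k, e0 k * e1 k with hG01
  set G10 : ℝ := ∑ k, e1 k * e0 k with hG10
  set G11 : ℝ := ∑ k, e1 k * e1 k with hG11
  have hDE0 : D0 = -E0 := by have := hDE 0; rw [← hD0, ← hE0] at this; linarith
  have hDE1 : D1 = -E1 := by have := hDE 1; rw [← hD1, ← hE1] at this; linarith
  have hGsym : G10 = G01 := by
    rw [hG10, hG01]; exact Finset.sum_congr rfl fun k _ => mul_comm _ _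
  have hdet : (gmat x u).det = G00 * G11 - G01 * G10 := by
    rw [Matrix.det_fin_two, hG00, hG11, hG01, hG10]
    show dot (vpd x 0 u) (vpd x 0 u) * dot (vpd x 1 u) (vpd x 1 u)
        - dot (vpd x 0 u) (vpd x 1 u) * dot (vpd x 1 u) (vpd x 0 u) = _
    rw [he0, he1]; rfl
  -- step 1 : Smap
  have hS : ∀ k, Smap ρ x (N A) u (N B u) k
      = 1/ρ u * (e0 k * D1 - e1 k * D0) := by
    intro k
    show (∑ l, pb ρ (fun v => x v k) (fun v => N A v l) u * N B u l) = _
    have h : ∀ l, pb ρ (fun v => x v k) (fun v => N A v l) u * N B u l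
        = (1/ρ u * e0 k) * (vpd (N A) 1 u l * N B u l)
          - (1/ρ u * e1 k) * (vpd (N A) 0 u l * N B u l) := by
      intro l
      show (1 / ρ u) * (pd 0 (fun v => x v k) u * pd 1 (fun v => N A v l) u
          - pd 1 (fun v => x v k) u * pd 0 (fun v => N A v l) u) * N B u l = _
      rw [he0, he1]
      show (1 / ρ u) * (pd 0 (fun v => x v k) u * pd 1 (fun v => N A v l) u
          - pd 1 (fun v => x v k) u * pd 0 (fun v => N A v l) u) * N B u l
        = (1/ρ u * pd 0 (fun v => x v k) u) * (pd 1 (fun v => N A v l) u * N B u l)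
          - (1/ρ u * pd 1 (fun v => x v k) u) * (pd 0 (fun v => N A v l) u * N B u l)
      ring
    rw [Finset.sum_congr rfl fun l _ => h l, Finset.sum_sub_distrib,
      ← Finset.mul_sum, ← Finset.mul_sum, ← hD0, ← hD1]
    ring
  -- step 2 : Bmap
  have hB : ∀ j, Bmap ρ x (N A) u (N B u) j
      = 1/(ρ u)^2 * (e0 j * (G10 * D1 - G11 * D0) - e1 j * (G00 * D1 - G01 * D0)) := by
    intro j
    show (∑ k, pb ρ (fun v => x v j) (fun v => x v k) u * Smap ρ x (N A) u (N B u) k) = _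
    have h : ∀ k, pb ρ (fun v => x v j) (fun v => x v k) u * Smap ρ x (N A) u (N B u) k
        = (1/(ρ u)^2 * (e0 j * D1)) * (e1 k * e0 k)
          - (1/(ρ u)^2 * (e0 j * D0)) * (e1 k * e1 k)
          - (1/(ρ u)^2 * (e1 j * D1)) * (e0 k * e0 k)
          + (1/(ρ u)^2 * (e1 j * D0)) * (e0 k * e1 k) := by
      intro k
      rw [hS k]
      show (1 / ρ u) * (pd 0 (fun v => x v j) u * pd 1 (fun v => x v k) u
          - pd 1 (fun v => x v j) u * pd 0 (fun v => x v k) u)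
          * (1/ρ u * (e0 k * D1 - e1 k * D0)) = _
      rw [he0, he1]
      show (1 / ρ u) * (pd 0 (fun v => x v j) u * pd 1 (fun v => x v k) u
          - pd 1 (fun v => x v j) u * pd 0 (fun v => x v k) u)
          * (1/ρ u * (pd 0 (fun v => x v k) u * D1 - pd 1 (fun v => x v k) u * D0))
        = (1/(ρ u)^2 * (pd 0 (fun v => x v j) u * D1))
            * (pd 1 (fun v => x v k) u * pd 0 (fun v => x v k) u)
          - (1/(ρ u)^2 * (pd 0 (fun v => x v j) u * D0))
            * (pd 1 (fun v => x v k) u * pd 1 (fun v => x v k) u)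
          - (1/(ρ u)^2 * (pd 1 (fun v => x v j) u * D1))
            * (pd 0 (fun v => x v k) u * pd 0 (fun v => x v k) u)
          + (1/(ρ u)^2 * (pd 1 (fun v => x v j) u * D0))
            * (pd 0 (fun v => x v k) u * pd 1 (fun v => x v k) u)
      field_simp
      ring
    rw [Finset.sum_congr rfl fun k _ => h k, Finset.sum_add_distrib,
      Finset.sum_sub_distrib, Finset.sum_sub_distrib,
      ← Finset.mul_sum, ← Finset.mul_sum, ← Finset.mul_sum, ← Finset.mul_sum,
      ← hG00, ← hG01, ← hG10, ← hG11]
    ring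
  -- step 3 : LHS
  have hL : dot (Bmap ρ x (N A) u (N B u)) (fun j => ∑ a, X a * vpd x a u j)
      = 1/(ρ u)^2 * (X 0 * (G00 * (G10 * D1 - G11 * D0) - G10 * (G00 * D1 - G01 * D0))
                   + X 1 * (G01 * (G10 * D1 - G11 * D0) - G11 * (G00 * D1 - G01 * D0))) := by
    show (∑ j, Bmap ρ x (N A) u (N B u) j * (∑ a, X a * vpd x a u j)) = _
    have h : ∀ j, Bmap ρ x (N A) u (N B u) j * (∑ a, X a * vpd x a u j)
        = (1/(ρ u)^2 * (X 0 * (G10 * D1 - G11 * D0))) * (e0 j * e0 j)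
          + (1/(ρ u)^2 * (X 1 * (G10 * D1 - G11 * D0))) * (e0 j * e1 j)
          - (1/(ρ u)^2 * (X 0 * (G00 * D1 - G01 * D0))) * (e1 j * e0 j)
          - (1/(ρ u)^2 * (X 1 * (G00 * D1 - G01 * D0))) * (e1 j * e1 j) := by
      intro j
      rw [hB j, Fin.sum_univ_two, ← he0, ← he1]
      ring
    rw [Finset.sum_congr rfl fun j _ => h j, Finset.sum_sub_distrib,
      Finset.sum_sub_distrib, Finset.sum_add_distrib,
      ← Finset.mul_sum, ← Finset.mul_sum, ← Finset.mul_sum, ← Finset.mul_sum,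
      ← hG00, ← hG01, ← hG10, ← hG11]
    ring
  -- step 4 : RHS
  have hR : dot (N A u) (fun j => ∑ a, X a * vpd (N B) a u j) = X 0 * E0 + X 1 * E1 := by
    show (∑ j, N A u j * (∑ a, X a * vpd (N B) a u j)) = _
    have h : ∀ j, N A u j * (∑ a, X a * vpd (N B) a u j)
        = X 0 * (N A u j * vpd (N B) 0 u j) + X 1 * (N A u j * vpd (N B) 1 u j) := by
      intro j; rw [Fin.sum_univ_two]; ring
    rw [Finset.sum_congr rfl fun j _ => h j, Finset.sum_add_distrib,
      ← Finset.mul_sum, ← Finset.mul_sum, ← hE0, ← hE1]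
  rw [hL, hR, hdet, hGsym, hDE0, hDE1]
  field_simp
  ring
end

section
/- For any choice of indices j₁,…,j_{p−1} ∈ {1,…,m}, the vector Z ∈ ℝ^m with components Z^i := (ρ/(2√(g·(p−1)!))) Σ_{k,l=1}^m ε_{i k l j₁⋯j_{p−1}} {x^k, x^l} is normal to Σ: ⟨Z, e_a⟩ = 0 for a = 1,2 at every point of U. -/
open scoped BigOperators

lemma lc_comp_perm {n : ℕ} (f : Fin n → Fin n) (σ : Equiv.Perm (Fin n)) :
    lc (f ∘ σ) = ((Equiv.Perm.sign σ : ℤ) : ℝ) * lc f := by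
  unfold lc
  by_cases h : Function.Bijective f
  · have h' : Function.Bijective (f ∘ σ) := h.comp σ.bijective
    rw [dif_pos h', dif_pos h]
    have he : Equiv.ofBijective (f ∘ σ) h' = σ.trans (Equiv.ofBijective f h) := by
      ext y; rfl
    have hm : σ.trans (Equiv.ofBijective f h) = (Equiv.ofBijective f h) * σ := rfl
    rw [he, hm, Equiv.Perm.sign_mul]
    push_cast
    ring
  · have h' : ¬ Function.Bijective (f ∘ σ) := by
      intro hc
      apply h
      have hf : f = (f ∘ σ) ∘ σ.symm := by funext y; simp
      rw [hf]
      exact hc.comp σ.symm.bijective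
    rw [dif_neg h', dif_neg h]; ring

lemma tuple3_swap01 {q : ℕ} (i k l : Fin (q + 3)) (I : Fin q → Fin (q + 3)) :
    tuple3 k i l I = tuple3 i k l I ∘ (Equiv.swap (0 : Fin (q + 3)) (Fin.succ 0)) := by
  funext y
  simp only [Function.comp]
  refine Fin.cases ?_ (fun y1 => Fin.cases ?_ (fun y2 => ?_) y1) y
  · rw [Equiv.swap_apply_left]
    simp only [tuple3, Fin.cons_zero, Fin.cons_succ]
  · rw [Equiv.swap_apply_right]
    simp only [tuple3, Fin.cons_zero, Fin.cons_succ]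
  · rw [Equiv.swap_apply_of_ne_of_ne (Fin.succ_ne_zero _)
      (fun h => Fin.succ_ne_zero _ (Fin.succ_injective _ h))]
    simp only [tuple3, Fin.cons_succ]

lemma tuple3_swap02 {q : ℕ} (i k l : Fin (q + 3)) (I : Fin q → Fin (q + 3)) :
    tuple3 l k i I = tuple3 i k l I ∘ (Equiv.swap (0 : Fin (q + 3)) (Fin.succ (Fin.succ 0))) := by
  funext y
  simp only [Function.comp]
  refine Fin.cases ?_ (fun y1 => Fin.cases ?_ (fun y2 => Fin.cases ?_ (fun y3 => ?_) y2) y1) y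
  · rw [Equiv.swap_apply_left]
    simp only [tuple3, Fin.cons_zero, Fin.cons_succ]
  · rw [Equiv.swap_apply_of_ne_of_ne (Fin.succ_ne_zero _)
      (fun h => Fin.succ_ne_zero _ ((Fin.succ_injective _ h).symm))]
    simp only [tuple3, Fin.cons_zero, Fin.cons_succ]
  · rw [Equiv.swap_apply_right]
    simp only [tuple3, Fin.cons_zero, Fin.cons_succ]
  · rw [Equiv.swap_apply_of_ne_of_ne (Fin.succ_ne_zero _)
      (fun h => Fin.succ_ne_zero _ (Fin.succ_injective _ (Fin.succ_injective _ h)))]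
    simp only [tuple3, Fin.cons_succ]

lemma lc_swap01 {q : ℕ} (i k l : Fin (q + 3)) (I : Fin q → Fin (q + 3)) :
    lc (tuple3 k i l I) = - lc (tuple3 i k l I) := by
  rw [tuple3_swap01, lc_comp_perm]
  rw [Equiv.Perm.sign_swap (Fin.succ_ne_zero _).symm]
  push_cast; ring

lemma lc_swap02 {q : ℕ} (i k l : Fin (q + 3)) (I : Fin q → Fin (q + 3)) :
    lc (tuple3 l k i I) = - lc (tuple3 i k l I) := by
  rw [tuple3_swap02, lc_comp_perm]
  rw [Equiv.Perm.sign_swap (Fin.succ_ne_zero _).symm]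
  push_cast; ring

lemma sum3_xxw {q : ℕ} (I : Fin q → Fin (q + 3)) (X W : Fin (q + 3) → ℝ) :
    ∑ i, ∑ k, ∑ l, lc (tuple3 i k l I) * (X i * X k * W l) = 0 := by
  have h : (∑ i, ∑ k, ∑ l, lc (tuple3 i k l I) * (X i * X k * W l))
      = -(∑ i, ∑ k, ∑ l, lc (tuple3 i k l I) * (X i * X k * W l)) := by
    conv_lhs => rw [Finset.sum_comm]
    rw [← Finset.sum_neg_distrib]
    refine Finset.sum_congr rfl fun i _ => ?_
    rw [← Finset.sum_neg_distrib]
    refine Finset.sum_congr rfl fun k _ => ?_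
    rw [← Finset.sum_neg_distrib]
    refine Finset.sum_congr rfl fun l _ => ?_
    rw [lc_swap01 i k l I]
    ring
  linarith

lemma sum3_xyx {q : ℕ} (I : Fin q → Fin (q + 3)) (X Y : Fin (q + 3) → ℝ) :
    ∑ i, ∑ k, ∑ l, lc (tuple3 i k l I) * (X i * Y k * X l) = 0 := by
  have hswap : (∑ i, ∑ k, ∑ l, lc (tuple3 i k l I) * (X i * Y k * X l))
      = ∑ i, ∑ l, ∑ k, lc (tuple3 i k l I) * (X i * Y k * X l) := by
    refine Finset.sum_congr rfl fun i _ => ?_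
    exact Finset.sum_comm
  rw [hswap]
  have h : (∑ i, ∑ l, ∑ k, lc (tuple3 i k l I) * (X i * Y k * X l))
      = -(∑ i, ∑ l, ∑ k, lc (tuple3 i k l I) * (X i * Y k * X l)) := by
    conv_lhs => rw [Finset.sum_comm]
    rw [← Finset.sum_neg_distrib]
    refine Finset.sum_congr rfl fun i _ => ?_
    rw [← Finset.sum_neg_distrib]
    refine Finset.sum_congr rfl fun l _ => ?_
    rw [← Finset.sum_neg_distrib]
    refine Finset.sum_congr rfl fun k _ => ?_
    rw [lc_swap02 i k l I]
    ring
  linarith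

lemma main_sum {q : ℕ} (I : Fin q → Fin (q + 3)) (A B : Fin (q + 3) → ℝ) (c : ℝ)
    (E : Fin (q + 3) → ℝ) (hE : E = A ∨ E = B) :
    ∑ i, (∑ k, ∑ l, lc (tuple3 i k l I) * (c * (A k * B l - B k * A l))) * E i = 0 := by
  have expand :
      (∑ i, (∑ k, ∑ l, lc (tuple3 i k l I) * (c * (A k * B l - B k * A l))) * E i)
      = c * ((∑ i, ∑ k, ∑ l, lc (tuple3 i k l I) * (E i * A k * B l))
           - (∑ i, ∑ k, ∑ l, lc (tuple3 i k l I) * (E i * B k * A l))) := by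
    rw [mul_sub, Finset.mul_sum, Finset.mul_sum, ← Finset.sum_sub_distrib]
    refine Finset.sum_congr rfl fun i _ => ?_
    rw [Finset.sum_mul, Finset.mul_sum, Finset.mul_sum, ← Finset.sum_sub_distrib]
    refine Finset.sum_congr rfl fun k _ => ?_
    rw [Finset.sum_mul, Finset.mul_sum, Finset.mul_sum, ← Finset.sum_sub_distrib]
    refine Finset.sum_congr rfl fun l _ => ?_
    ring
  rw [expand]
  rcases hE with rfl | rfl
  · rw [sum3_xxw I E B, sum3_xyx I E B]
    ring
  · rw [sum3_xyx I E A, sum3_xxw I E A]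
    ring

theorem statement14 (U : Set (ℝ × ℝ)) (hU : IsOpen U) (q : ℕ)
    (ρ : ℝ × ℝ → ℝ) (hρ : ContDiffOn ℝ (⊤ : ℕ∞) ρ U) (hρ0 : ∀ u ∈ U, ρ u ≠ 0)
    (x : ℝ × ℝ → Fin (q + 3) → ℝ) (hx : ContDiffOn ℝ (⊤ : ℕ∞) x U)
    (hind : ∀ u ∈ U, LinearIndependent ℝ ![vpd x 0 u, vpd x 1 u])
    (hg : ∀ u ∈ U, 0 < (gmat x u).det) :
    ∀ u ∈ U, ∀ I : Fin q → Fin (q + 3), ∀ a : Fin 2,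
      dot (Zvec ρ x u I) (vpd x a u) = 0 := by
  intro u hu I a
  have hE : vpd x a u = vpd x 0 u ∨ vpd x a u = vpd x 1 u := by
    fin_cases a
    · exact Or.inl rfl
    · exact Or.inr rfl
  have key := main_sum I (vpd x 0 u) (vpd x 1 u) (1 / ρ u) (vpd x a u) hE
  simp only [vpd] at key
  simp only [dot, Zvec, pb, vpd, mul_assoc, ← Finset.mul_sum]
  rw [key, mul_zero]
end

section
/- For multi-indices I = (i₁,…,i_{p−1}) ∈ {1,…,m}^{p−1}, define Z_I ∈ ℝ^m by Z_I^i := (ρ/(2√(g·(p−1)!))) Σ_{k,l=1}^m ε_{i k l i₁⋯i_{p−1}} {x^k, x^l}, and set 𝒵_I^J := ⟨Z_I, Z_J⟩. Then at every point of U: (1) Σ_I Z_I^i Z_I^j = δ^{ij} + (ρ²/g)(P²)^{ij} for all i,j, where the sum runs over all multi-indices I ∈ {1,…,m}^{p−1}; (2) Σ_L 𝒵_I^L 𝒵_L^J = 𝒵_I^J for all multi-indices I, J; and (3) Σ_I 𝒵_I^I = p. -/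
open scoped BigOperators

/-! ### Auxiliary machinery -/

noncomputable def del {n m : ℕ} (u v : Fin n → Fin m) : ℝ :=
  Matrix.det (Matrix.of fun r s => if u r = v s then (1:ℝ) else 0)

lemma lc_not_bij {n : ℕ} {f : Fin n → Fin n} (h : ¬ Function.Bijective f) : lc f = 0 :=
  dif_neg h

lemma lc_mul_lc {n : ℕ} (f g : Fin n → Fin n) : lc f * lc g = del f g := by
  by_cases hf : Function.Bijective f
  · by_cases hg : Function.Bijective g
    · set σ : Equiv.Perm (Fin n) :=
        (Equiv.ofBijective f hf).trans (Equiv.ofBijective g hg).symm with hσ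
      have hM : (Matrix.of fun r s => if f r = g s then (1:ℝ) else 0) = σ.permMatrix ℝ := by
        ext r s
        simp only [Matrix.of_apply, Equiv.Perm.permMatrix, PEquiv.toMatrix_apply,
          Equiv.toPEquiv_apply, Option.mem_def, Option.some.injEq]
        congr 1
        rw [hσ]
        simp only [Equiv.trans_apply, Equiv.symm_apply_eq, Equiv.ofBijective_apply, eq_iff_iff]
      rw [del, hM, Matrix.det_permutation, lc, dif_pos hf, lc, dif_pos hg, hσ]
      have : Equiv.Perm.sign ((Equiv.ofBijective f hf).trans (Equiv.ofBijective g hg).symm)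
          = Equiv.Perm.sign (Equiv.ofBijective f hf) * Equiv.Perm.sign (Equiv.ofBijective g hg) := by
        have : (Equiv.ofBijective f hf).trans (Equiv.ofBijective g hg).symm
            = (Equiv.ofBijective g hg).symm * (Equiv.ofBijective f hf) := rfl
        rw [this, map_mul, Equiv.Perm.sign_symm, mul_comm]
      rw [this]
      push_cast
      ring
    · have : ∃ r r', r ≠ r' ∧ g r = g r' := by
        have : ¬ Function.Injective g := fun h => hg ((Finite.injective_iff_bijective).mp h)
        simp only [Function.Injective] at this
        push_neg at this
        obtain ⟨r, r', h1, h2⟩ := this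
        exact ⟨r, r', h2, h1⟩
      obtain ⟨r, r', hne, heq⟩ := this
      rw [lc_not_bij hg, mul_zero, del, ← Matrix.det_transpose]
      refine (Matrix.det_zero_of_row_eq hne ?_).symm
      ext s
      simp [Matrix.transpose_apply, heq]
  · have : ∃ r r', r ≠ r' ∧ f r = f r' := by
      have : ¬ Function.Injective f := fun h => hf ((Finite.injective_iff_bijective).mp h)
      simp only [Function.Injective] at this
      push_neg at this
      obtain ⟨r, r', h1, h2⟩ := this
      exact ⟨r, r', h2, h1⟩
    obtain ⟨r, r', hne, heq⟩ := this
    rw [lc_not_bij hf, zero_mul, del]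
    refine (Matrix.det_zero_of_row_eq hne ?_).symm
    ext s
    simp [heq]

lemma del_comp_perm {n m : ℕ} (σ : Equiv.Perm (Fin n)) (u v : Fin n → Fin m) :
    del (u ∘ σ) (v ∘ σ) = del u v := by
  unfold del
  rw [← Matrix.det_submatrix_equiv_self σ (Matrix.of fun r s => if u r = v s then (1:ℝ) else 0)]
  rfl

lemma del_snoc_eq_del_cons {s m : ℕ} (u v : Fin s → Fin m) (t : Fin m) :
    del (Fin.snoc u t) (Fin.snoc v t) = del (Fin.cons t u) (Fin.cons t v) := by
  have key : ∀ (w : Fin s → Fin m),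
      (Fin.snoc w t : Fin (s+1) → Fin m) ∘ ((finRotate (s+1)).symm : Equiv.Perm (Fin (s+1)))
        = Fin.cons t w := by
    intro w
    funext j
    refine Fin.cases ?_ (fun j' => ?_) j
    · have h0 : (finRotate (s+1)).symm 0 = Fin.last s := by
        rw [Equiv.symm_apply_eq, finRotate_last]
      simp [h0]
    · have h1 : (finRotate (s+1)).symm j'.succ = j'.castSucc := by
        rw [Equiv.symm_apply_eq, finRotate_succ_apply, Fin.coeSucc_eq_succ]
      simp [h1]
  rw [← key u, ← key v, del_comp_perm]

lemma del_expand {s m : ℕ} (u v : Fin s → Fin m) :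
    del u v = ∑ e : Equiv.Perm (Fin s),
      ((Equiv.Perm.sign e : ℤ) : ℝ) * ∏ i, (if u (e i) = v i then (1:ℝ) else 0) := by
  rw [del, Matrix.det_apply']
  rfl

lemma sum_del_cons {s m : ℕ} (u v : Fin s → Fin m) :
    ∑ t : Fin m, del (Fin.cons t u) (Fin.cons t v) = ((m:ℝ) - s) * del u v := by
  have hdet : ∀ t : Fin m, del (Fin.cons t u) (Fin.cons t v)
      = ∑ pe : Fin (s+1) × Equiv.Perm (Fin s),
        ((Equiv.Perm.sign (Equiv.Perm.decomposeFin.symm pe) : ℤ) : ℝ) *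
          ((if (Fin.cons t u : Fin (s+1) → Fin m) ((Equiv.Perm.decomposeFin.symm pe) 0) = t
              then (1:ℝ) else 0) *
            ∏ i : Fin s, (if (Fin.cons t u : Fin (s+1) → Fin m)
                ((Equiv.Perm.decomposeFin.symm pe) i.succ) = v i then (1:ℝ) else 0)) := by
    intro t
    rw [del_expand, ← Equiv.sum_comp (Equiv.Perm.decomposeFin.symm)]
    refine Finset.sum_congr rfl fun pe _ => ?_
    rw [Fin.prod_univ_succ]
    simp only [Fin.cons_zero, Fin.cons_succ]
  have main : ∀ (p : Fin (s+1)) (e : Equiv.Perm (Fin s)),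
      (∑ t : Fin m,
        ((Equiv.Perm.sign (Equiv.Perm.decomposeFin.symm (p, e)) : ℤ) : ℝ) *
          ((if (Fin.cons t u : Fin (s+1) → Fin m) ((Equiv.Perm.decomposeFin.symm (p, e)) 0) = t
              then (1:ℝ) else 0) *
            ∏ i : Fin s, (if (Fin.cons t u : Fin (s+1) → Fin m)
                ((Equiv.Perm.decomposeFin.symm (p, e)) i.succ) = v i then (1:ℝ) else 0)))
      = (if p = 0 then (m:ℝ) else -1) *
          (((Equiv.Perm.sign e : ℤ) : ℝ) * ∏ i, (if u (e i) = v i then (1:ℝ) else 0)) := by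
    intro p e
    simp only [Equiv.Perm.decomposeFin_symm_apply_zero, Equiv.Perm.decomposeFin_symm_apply_succ,
      Equiv.Perm.decomposeFin.symm_sign]
    refine Fin.cases ?_ (fun k => ?_) p
    · simp only [if_pos rfl, Equiv.swap_self, Equiv.refl_apply, Fin.cons_zero, Fin.cons_succ,
        one_mul]
      rw [Finset.sum_const, Finset.card_univ, Fintype.card_fin, nsmul_eq_mul]
      push_cast
      ring
    · have hk0 : (k.succ : Fin (s+1)) ≠ 0 := Fin.succ_ne_zero k
      simp only [if_neg hk0, Fin.cons_succ]
      rw [Finset.sum_eq_single (u k)]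
      · rw [if_pos rfl]
        have hprod : ∀ i : Fin s,
            (if (Fin.cons (u k) u : Fin (s+1) → Fin m) (Equiv.swap 0 k.succ ((e i).succ)) = v i
              then (1:ℝ) else 0) = (if u (e i) = v i then (1:ℝ) else 0) := by
          intro i
          by_cases hek : e i = k
          · rw [hek, Equiv.swap_apply_right, Fin.cons_zero]
          · rw [Equiv.swap_apply_of_ne_of_ne (Fin.succ_ne_zero _)
              (fun hc => hek (Fin.succ_injective _ hc)), Fin.cons_succ]
        rw [Finset.prod_congr rfl fun i _ => hprod i]
        push_cast
        ring
      · intro t _ hne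
        rw [if_neg (fun hc => hne hc.symm), zero_mul, mul_zero]
      · intro habs
        exact absurd (Finset.mem_univ _) habs
  calc ∑ t : Fin m, del (Fin.cons t u) (Fin.cons t v)
      = ∑ pe : Fin (s+1) × Equiv.Perm (Fin s), ∑ t : Fin m,
        ((Equiv.Perm.sign (Equiv.Perm.decomposeFin.symm pe) : ℤ) : ℝ) *
          ((if (Fin.cons t u : Fin (s+1) → Fin m) ((Equiv.Perm.decomposeFin.symm pe) 0) = t
              then (1:ℝ) else 0) *
            ∏ i : Fin s, (if (Fin.cons t u : Fin (s+1) → Fin m)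
                ((Equiv.Perm.decomposeFin.symm pe) i.succ) = v i then (1:ℝ) else 0)) := by
        rw [Finset.sum_congr rfl fun t _ => hdet t, Finset.sum_comm]
    _ = ∑ p : Fin (s+1), ∑ e : Equiv.Perm (Fin s), (if p = 0 then (m:ℝ) else -1) *
          (((Equiv.Perm.sign e : ℤ) : ℝ) * ∏ i, (if u (e i) = v i then (1:ℝ) else 0)) := by
        rw [Fintype.sum_prod_type]
        exact Finset.sum_congr rfl fun p _ => Finset.sum_congr rfl fun e _ => main p e
    _ = ((m:ℝ) - s) * del u v := by
        rw [del_expand]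
        rw [Finset.sum_congr rfl fun p (_ : p ∈ Finset.univ) => (Finset.mul_sum _ _ _).symm.trans rfl]
        rw [← Finset.sum_mul, Fin.sum_univ_succ]
        simp only [if_pos rfl, Fin.succ_ne_zero, if_neg, ite_false, if_true, eq_self_iff_true]
        rw [Finset.sum_const, Finset.card_univ, Fintype.card_fin, nsmul_eq_mul]
        ring

lemma tuple3_snoc {α : Type*} {q : ℕ} (i k l : α) (I : Fin q → α) (t : α) :
    tuple3 i k l (Fin.snoc I t) = Fin.snoc (tuple3 i k l I) t := by
  unfold tuple3
  rw [Fin.cons_snoc_eq_snoc_cons, Fin.cons_snoc_eq_snoc_cons, Fin.cons_snoc_eq_snoc_cons]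

lemma sum_snoc_split {β : Type*} [Fintype β] [DecidableEq β] {t : ℕ} (F : (Fin (t+1) → β) → ℝ) :
    ∑ I : Fin (t+1) → β, F I = ∑ I : Fin t → β, ∑ x : β, F (Fin.snoc I x) := by
  rw [← (Fin.snocEquiv (fun _ => β)).sum_comp F, Fintype.sum_prod_type, Finset.sum_comm]
  rfl

lemma sum_del_tuple3 {m : ℕ} : ∀ (t : ℕ) (i k l j k' l' : Fin m),
    ∑ I : Fin t → Fin m, del (tuple3 i k l I) (tuple3 j k' l' I)
      = (∏ r ∈ Finset.range t, ((m:ℝ) - 3 - r)) * del ![i,k,l] ![j,k',l'] := by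
  intro t
  induction t with
  | zero =>
    intro i k l j k' l'
    rw [Fintype.sum_unique, Finset.range_zero, Finset.prod_empty, one_mul]
    congr 1
  | succ t ih =>
    intro i k l j k' l'
    rw [sum_snoc_split (fun I => del (tuple3 i k l I) (tuple3 j k' l' I))]
    have hin : ∀ I : Fin t → Fin m,
        ∑ x : Fin m, del (tuple3 i k l (Fin.snoc I x)) (tuple3 j k' l' (Fin.snoc I x))
          = ((m:ℝ) - (t+3)) * del (tuple3 i k l I) (tuple3 j k' l' I) := by
      intro I
      have h4 : ∀ x : Fin m, del (tuple3 i k l (Fin.snoc I x)) (tuple3 j k' l' (Fin.snoc I x))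
          = del (Fin.cons x (tuple3 i k l I)) (Fin.cons x (tuple3 j k' l' I)) := by
        intro x
        rw [tuple3_snoc, tuple3_snoc, del_snoc_eq_del_cons]
      rw [Finset.sum_congr rfl fun x _ => h4 x, sum_del_cons]
      push_cast
      ring_nf
    rw [Finset.sum_congr rfl fun I _ => hin I, ← Finset.mul_sum, ih i k l j k' l',
      Finset.prod_range_succ]
    push_cast
    ring

lemma prod_sub_factorial : ∀ q : ℕ, ∏ r ∈ Finset.range q, ((q:ℝ) - r) = (q.factorial : ℝ) := by
  intro q
  induction q with
  | zero => simp
  | succ n ih =>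
    rw [Finset.prod_range_succ']
    push_cast
    have h5 : ∀ r ∈ Finset.range n, ((n:ℝ) + 1 - ((r:ℝ) + 1)) = (n:ℝ) - r := by intros; ring
    rw [Finset.prod_congr rfl h5, ih, Nat.factorial_succ]
    push_cast
    ring

lemma sum_lc_tuple3 (q : ℕ) (i k l j k' l' : Fin (q+3)) :
    ∑ I : Fin q → Fin (q+3), lc (tuple3 i k l I) * lc (tuple3 j k' l' I)
      = (q.factorial : ℝ) * del ![i,k,l] ![j,k',l'] := by
  have h1 : ∀ I : Fin q → Fin (q+3), lc (tuple3 i k l I) * lc (tuple3 j k' l' I)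
      = del (tuple3 i k l I) (tuple3 j k' l' I) := fun I => lc_mul_lc _ _
  rw [Finset.sum_congr rfl fun I _ => h1 I, sum_del_tuple3 q i k l j k' l']
  congr 1
  rw [← prod_sub_factorial q]
  refine Finset.prod_congr rfl fun r hr => ?_
  push_cast
  ring

lemma del3_eq {m : ℕ} (i k l j k' l' : Fin m) :
    del ![i,k,l] ![j,k',l'] =
      (if i = j then (1:ℝ) else 0) * (if k = k' then (1:ℝ) else 0) * (if l = l' then (1:ℝ) else 0)
      - (if i = j then (1:ℝ) else 0) * (if k = l' then (1:ℝ) else 0) * (if l = k' then (1:ℝ) else 0)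
      - (if i = k' then (1:ℝ) else 0) * (if k = j then (1:ℝ) else 0) * (if l = l' then (1:ℝ) else 0)
      + (if i = k' then (1:ℝ) else 0) * (if k = l' then (1:ℝ) else 0) * (if l = j then (1:ℝ) else 0)
      + (if i = l' then (1:ℝ) else 0) * (if k = j then (1:ℝ) else 0) * (if l = k' then (1:ℝ) else 0)
      - (if i = l' then (1:ℝ) else 0) * (if k = k' then (1:ℝ) else 0) * (if l = j then (1:ℝ) else 0) := by
  rw [del, Matrix.det_fin_three]
  simp only [Matrix.of_apply, Matrix.cons_val', Matrix.cons_val_zero, Matrix.cons_val_one,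
    Matrix.head_cons, Matrix.cons_val_two, Matrix.tail_cons, Matrix.empty_val',
    Matrix.cons_val_fin_one, Matrix.head_fin_const]
  rfl

lemma sum_ite_const {α : Type*} [Fintype α] (P : Prop) [Decidable P] (f : α → ℝ) :
    ∑ x : α, (if P then f x else 0) = if P then ∑ x, f x else 0 := by
  split <;> simp

lemma collapse {m : ℕ} (a b : Fin m → ℝ) (i j : Fin m) :
    ∑ k, ∑ k', ∑ l, ∑ l', del ![i,k,l] ![j,k',l'] * (a k * b l * (a k' * b l'))
    = (if i = j then (1:ℝ) else 0) *
        ((∑ k, a k * a k) * (∑ k, b k * b k) - (∑ k, a k * b k) * (∑ k, a k * b k))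
      - (∑ k, b k * b k) * (a i * a j) - (∑ k, a k * a k) * (b i * b j)
      + (∑ k, a k * b k) * (a i * b j + b i * a j) := by
  simp_rw [del3_eq, sub_mul, add_mul, mul_assoc]
  simp only [sub_mul, add_mul, ite_mul, mul_ite, mul_zero, zero_mul, one_mul, mul_one,
    Finset.sum_add_distrib, Finset.sum_sub_distrib, sum_ite_const,
    Finset.sum_ite_eq, Finset.sum_ite_eq', Finset.mem_univ, if_true]
  have e1 : ∑ x : Fin m, ∑ x1 : Fin m, a x * (b x1 * (a x * b x1))
      = (∑ k, a k * a k) * (∑ k, b k * b k) := by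
    rw [Finset.sum_mul_sum]
    exact Finset.sum_congr rfl fun x _ => Finset.sum_congr rfl fun y _ => by ring
  have e2 : ∑ x : Fin m, ∑ x1 : Fin m, a x * (b x1 * (a x1 * b x))
      = (∑ k, a k * b k) * (∑ k, a k * b k) := by
    rw [Finset.sum_mul_sum]
    exact Finset.sum_congr rfl fun x _ => Finset.sum_congr rfl fun y _ => by ring
  have e3 : ∑ x : Fin m, a j * (b x * (a i * b x)) = (∑ k, b k * b k) * (a i * a j) := by
    rw [Finset.sum_mul]
    exact Finset.sum_congr rfl fun x _ => by ring
  have e4 : ∑ x : Fin m, a x * (b j * (a i * b x)) = (∑ k, a k * b k) * (a i * b j) := by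
    rw [Finset.sum_mul]
    exact Finset.sum_congr rfl fun x _ => by ring
  have e5 : ∑ x : Fin m, a j * (b x * (a x * b i)) = (∑ k, a k * b k) * (b i * a j) := by
    rw [Finset.sum_mul]
    exact Finset.sum_congr rfl fun x _ => by ring
  have e6 : ∑ x : Fin m, a x * (b j * (a x * b i)) = (∑ k, a k * a k) * (b i * b j) := by
    rw [Finset.sum_mul]
    exact Finset.sum_congr rfl fun x _ => by ring
  rw [e1, e2, e3, e4, e5, e6]
  split_ifs <;> ring

lemma key (q : ℕ) (a b : Fin (q+3) → ℝ) (i j : Fin (q+3)) :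
    ∑ I : Fin q → Fin (q+3),
      (∑ k, ∑ l, lc (tuple3 i k l I) * (a k * b l)) *
      (∑ k, ∑ l, lc (tuple3 j k l I) * (a k * b l))
    = (q.factorial : ℝ) *
        ((if i = j then (1:ℝ) else 0) *
          ((∑ k, a k * a k) * (∑ k, b k * b k) - (∑ k, a k * b k) * (∑ k, a k * b k))
        - (∑ k, b k * b k) * (a i * a j) - (∑ k, a k * a k) * (b i * b j)
        + (∑ k, a k * b k) * (a i * b j + b i * a j)) := by
  have expand : ∀ I : Fin q → Fin (q+3),
      (∑ k, ∑ l, lc (tuple3 i k l I) * (a k * b l)) *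
      (∑ k, ∑ l, lc (tuple3 j k l I) * (a k * b l))
      = ∑ k, ∑ k', ∑ l, ∑ l',
          (lc (tuple3 i k l I) * (a k * b l)) * (lc (tuple3 j k' l' I) * (a k' * b l')) := by
    intro I
    rw [Finset.sum_mul_sum]
    refine Finset.sum_congr rfl fun k _ => Finset.sum_congr rfl fun k' _ => ?_
    rw [Finset.sum_mul_sum]
  rw [Finset.sum_congr rfl fun I _ => expand I]
  rw [Finset.sum_comm]
  refine Eq.trans (Finset.sum_congr rfl fun k _ => ?_)
    (?_ : ∑ k, ∑ k', ∑ l, ∑ l', (∑ I : Fin q → Fin (q+3),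
      lc (tuple3 i k l I) * lc (tuple3 j k' l' I)) * (a k * b l * (a k' * b l')) = _)
  · rw [Finset.sum_comm]
    refine Finset.sum_congr rfl fun k' _ => ?_
    rw [Finset.sum_comm]
    refine Finset.sum_congr rfl fun l _ => ?_
    rw [Finset.sum_comm]
    refine Finset.sum_congr rfl fun l' _ => ?_
    exact (Finset.sum_congr rfl fun I _ => by ring).trans (Finset.sum_mul ..).symm
  · simp_rw [sum_lc_tuple3, mul_assoc, ← Finset.mul_sum]
    congr 1
    rw [← collapse a b i j]
    exact Finset.sum_congr rfl fun k _ => Finset.sum_congr rfl fun k' _ =>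
      Finset.sum_congr rfl fun l _ => Finset.sum_congr rfl fun l' _ => by ring

lemma fin3_ne0 {q : ℕ} (w : Fin q) : (w.succ.succ.succ : Fin (q+3)) ≠ 0 := Fin.succ_ne_zero _
lemma fin3_ne1 {q : ℕ} (w : Fin q) : (w.succ.succ.succ : Fin (q+3)) ≠ 1 := by
  rw [← Fin.succ_zero_eq_one]
  exact fun h => Fin.succ_ne_zero _ (Fin.succ_injective _ h)
lemma fin3_ne2 {q : ℕ} (w : Fin q) : (w.succ.succ.succ : Fin (q+3)) ≠ 2 := by
  rw [← Fin.succ_one_eq_two, ← Fin.succ_zero_eq_one]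
  exact fun h => Fin.succ_ne_zero _ (Fin.succ_injective _ (Fin.succ_injective _ h))

lemma ne01 {q : ℕ} : (0 : Fin (q+3)) ≠ 1 := Fin.zero_ne_one
lemma ne02 {q : ℕ} : (0 : Fin (q+3)) ≠ 2 := by
  rw [← Fin.succ_one_eq_two]; exact fun h => Fin.succ_ne_zero _ h.symm
lemma ne12 {q : ℕ} : (1 : Fin (q+3)) ≠ 2 := by
  rw [← Fin.succ_one_eq_two, ← Fin.succ_zero_eq_one]
  intro h
  exact (Fin.zero_ne_one) (Fin.succ_injective _ h)

lemma t3_at0 {α : Type*} {q:ℕ} (i k l : α) (I : Fin q → α) : tuple3 i k l I 0 = i := rfl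
lemma t3_at1 {α : Type*} {q:ℕ} (i k l : α) (I : Fin q → α) : tuple3 i k l I 1 = k := by
  rw [tuple3, ← Fin.succ_zero_eq_one, Fin.cons_succ, Fin.cons_zero]
lemma t3_at2 {α : Type*} {q:ℕ} (i k l : α) (I : Fin q → α) : tuple3 i k l I 2 = l := by
  rw [tuple3, ← Fin.succ_one_eq_two, Fin.cons_succ, ← Fin.succ_zero_eq_one, Fin.cons_succ,
    Fin.cons_zero]
lemma t3_at3 {α : Type*} {q:ℕ} (i k l : α) (I : Fin q → α) (w : Fin q) :
    tuple3 i k l I w.succ.succ.succ = I w := by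
  rw [tuple3, Fin.cons_succ, Fin.cons_succ, Fin.cons_succ]

lemma t3_swap01 {q:ℕ} (i k l : Fin (q+3)) (I : Fin q → Fin (q+3)) :
    tuple3 k i l I = tuple3 i k l I ∘ (Equiv.swap 0 1) := by
  funext w
  refine Fin.cases ?_ (fun w1 => ?_) w
  · rw [t3_at0, Function.comp_apply, Equiv.swap_apply_left, t3_at1]
  refine Fin.cases ?_ (fun w2 => ?_) w1
  · rw [Function.comp_apply, Fin.succ_zero_eq_one, Equiv.swap_apply_right, t3_at0]
    rfl
  refine Fin.cases ?_ (fun w3 => ?_) w2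
  · rw [Function.comp_apply, Fin.succ_zero_eq_one, Fin.succ_one_eq_two,
      Equiv.swap_apply_of_ne_of_ne ne02.symm ne12.symm, t3_at2]
    rfl
  · rw [Function.comp_apply, Equiv.swap_apply_of_ne_of_ne (fin3_ne0 w3) (fin3_ne1 w3), t3_at3]
    rfl

lemma t3_swap02 {q:ℕ} (i k l : Fin (q+3)) (I : Fin q → Fin (q+3)) :
    tuple3 l k i I = tuple3 i k l I ∘ (Equiv.swap 0 2) := by
  funext w
  refine Fin.cases ?_ (fun w1 => ?_) w
  · rw [t3_at0, Function.comp_apply, Equiv.swap_apply_left, t3_at2]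
  refine Fin.cases ?_ (fun w2 => ?_) w1
  · rw [Function.comp_apply, Fin.succ_zero_eq_one,
      Equiv.swap_apply_of_ne_of_ne ne01.symm ne12, t3_at1]
    rfl
  refine Fin.cases ?_ (fun w3 => ?_) w2
  · rw [Function.comp_apply, Fin.succ_zero_eq_one, Fin.succ_one_eq_two,
      Equiv.swap_apply_right, t3_at0]
    rfl
  · rw [Function.comp_apply, Equiv.swap_apply_of_ne_of_ne (fin3_ne0 w3) (fin3_ne2 w3), t3_at3]
    rfl

lemma t3_swap12 {q:ℕ} (i k l : Fin (q+3)) (I : Fin q → Fin (q+3)) :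
    tuple3 i l k I = tuple3 i k l I ∘ (Equiv.swap 1 2) := by
  funext w
  refine Fin.cases ?_ (fun w1 => ?_) w
  · rw [t3_at0, Function.comp_apply, Equiv.swap_apply_of_ne_of_ne ne01 ne02, t3_at0]
  refine Fin.cases ?_ (fun w2 => ?_) w1
  · rw [Function.comp_apply, Fin.succ_zero_eq_one, Equiv.swap_apply_left, t3_at2]
    rfl
  refine Fin.cases ?_ (fun w3 => ?_) w2
  · rw [Function.comp_apply, Fin.succ_zero_eq_one, Fin.succ_one_eq_two,
      Equiv.swap_apply_right, t3_at1]
    rfl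
  · rw [Function.comp_apply, Equiv.swap_apply_of_ne_of_ne (fin3_ne1 w3) (fin3_ne2 w3), t3_at3]
    rfl

lemma lc_t3_swap01 {q : ℕ} (i k l : Fin (q+3)) (I : Fin q → Fin (q+3)) :
    lc (tuple3 k i l I) = - lc (tuple3 i k l I) := by
  rw [t3_swap01, lc_comp_perm, Equiv.Perm.sign_swap ne01]
  push_cast
  ring

lemma lc_t3_swap02 {q : ℕ} (i k l : Fin (q+3)) (I : Fin q → Fin (q+3)) :
    lc (tuple3 l k i I) = - lc (tuple3 i k l I) := by
  rw [t3_swap02, lc_comp_perm, Equiv.Perm.sign_swap ne02]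
  push_cast
  ring

lemma lc_t3_swap12 {q : ℕ} (i k l : Fin (q+3)) (I : Fin q → Fin (q+3)) :
    lc (tuple3 i l k I) = - lc (tuple3 i k l I) := by
  rw [t3_swap12, lc_comp_perm, Equiv.Perm.sign_swap ne12]
  push_cast
  ring

lemma sum_antisym12 {q : ℕ} (a b : Fin (q+3) → ℝ) (i : Fin (q+3)) (I : Fin q → Fin (q+3)) :
    ∑ k, ∑ l, lc (tuple3 i k l I) * (b k * a l)
      = - ∑ k, ∑ l, lc (tuple3 i k l I) * (a k * b l) := by
  have h1 : ∑ k, ∑ l, lc (tuple3 i k l I) * (b k * a l)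
      = ∑ k, ∑ l, lc (tuple3 i l k I) * (b l * a k) := Finset.sum_comm
  rw [h1]
  rw [← Finset.sum_neg_distrib]
  refine Finset.sum_congr rfl fun k _ => ?_
  rw [← Finset.sum_neg_distrib]
  refine Finset.sum_congr rfl fun l _ => ?_
  rw [lc_t3_swap12]
  ring

lemma orthA {q : ℕ} (a b : Fin (q+3) → ℝ) (I : Fin q → Fin (q+3)) :
    ∑ i, a i * (∑ k, ∑ l, lc (tuple3 i k l I) * (a k * b l)) = 0 := by
  have hform : ∑ i, a i * (∑ k, ∑ l, lc (tuple3 i k l I) * (a k * b l))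
      = ∑ i, ∑ k, ∑ l, lc (tuple3 i k l I) * (a i * a k * b l) := by
    refine Finset.sum_congr rfl fun i _ => ?_
    rw [Finset.mul_sum]
    refine Finset.sum_congr rfl fun k _ => ?_
    rw [Finset.mul_sum]
    exact Finset.sum_congr rfl fun l _ => by ring
  rw [hform]
  have hswap : ∑ i, ∑ k, ∑ l, lc (tuple3 i k l I) * (a i * a k * b l)
      = ∑ i, ∑ k, ∑ l, lc (tuple3 k i l I) * (a k * a i * b l) := Finset.sum_comm
  have hneg : ∑ i, ∑ k, ∑ l, lc (tuple3 k i l I) * (a k * a i * b l)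
      = - ∑ i, ∑ k, ∑ l, lc (tuple3 i k l I) * (a i * a k * b l) := by
    rw [← Finset.sum_neg_distrib]
    refine Finset.sum_congr rfl fun i _ => ?_
    rw [← Finset.sum_neg_distrib]
    refine Finset.sum_congr rfl fun k _ => ?_
    rw [← Finset.sum_neg_distrib]
    refine Finset.sum_congr rfl fun l _ => ?_
    rw [lc_t3_swap01]
    ring
  have := hswap.trans hneg
  linarith

lemma orthB {q : ℕ} (a b : Fin (q+3) → ℝ) (I : Fin q → Fin (q+3)) :
    ∑ i, b i * (∑ k, ∑ l, lc (tuple3 i k l I) * (a k * b l)) = 0 := by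
  have hform : ∑ i, b i * (∑ k, ∑ l, lc (tuple3 i k l I) * (a k * b l))
      = ∑ i, ∑ k, ∑ l, lc (tuple3 i k l I) * (b i * a k * b l) := by
    refine Finset.sum_congr rfl fun i _ => ?_
    rw [Finset.mul_sum]
    refine Finset.sum_congr rfl fun k _ => ?_
    rw [Finset.mul_sum]
    exact Finset.sum_congr rfl fun l _ => by ring
  rw [hform]
  have hswap : ∑ i, ∑ k, ∑ l, lc (tuple3 i k l I) * (b i * a k * b l)
      = ∑ i, ∑ k, ∑ l, lc (tuple3 l k i I) * (b l * a k * b i) := by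
    calc ∑ i, ∑ k, ∑ l, lc (tuple3 i k l I) * (b i * a k * b l)
        = ∑ i, ∑ l, ∑ k, lc (tuple3 i k l I) * (b i * a k * b l) :=
          Finset.sum_congr rfl fun i _ => Finset.sum_comm
      _ = ∑ l, ∑ i, ∑ k, lc (tuple3 i k l I) * (b i * a k * b l) := Finset.sum_comm
      _ = ∑ i, ∑ k, ∑ l, lc (tuple3 l k i I) * (b l * a k * b i) :=
          Finset.sum_congr rfl fun l _ => Finset.sum_comm
  have hneg : ∑ i, ∑ k, ∑ l, lc (tuple3 l k i I) * (b l * a k * b i)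
      = - ∑ i, ∑ k, ∑ l, lc (tuple3 i k l I) * (b i * a k * b l) := by
    rw [← Finset.sum_neg_distrib]
    refine Finset.sum_congr rfl fun i _ => ?_
    rw [← Finset.sum_neg_distrib]
    refine Finset.sum_congr rfl fun k _ => ?_
    rw [← Finset.sum_neg_distrib]
    refine Finset.sum_congr rfl fun l _ => ?_
    rw [lc_t3_swap02]
    ring
  have := hswap.trans hneg
  linarith

theorem statement15 (U : Set (ℝ × ℝ)) (hU : IsOpen U) (q : ℕ)
    (ρ : ℝ × ℝ → ℝ) (hρ : ContDiffOn ℝ (⊤ : ℕ∞) ρ U) (hρ0 : ∀ u ∈ U, ρ u ≠ 0)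
    (x : ℝ × ℝ → Fin (q + 3) → ℝ) (hx : ContDiffOn ℝ (⊤ : ℕ∞) x U)
    (hind : ∀ u ∈ U, LinearIndependent ℝ ![vpd x 0 u, vpd x 1 u])
    (hg : ∀ u ∈ U, 0 < (gmat x u).det) :
    ∀ u ∈ U,
      (∀ i j : Fin (q + 3),
        ∑ I : Fin q → Fin (q + 3), Zvec ρ x u I i * Zvec ρ x u I j =
          (if i = j then (1 : ℝ) else 0) +
            ((ρ u) ^ 2 / (gmat x u).det) *
              ∑ k, pb ρ (fun v => x v i) (fun v => x v k) u *
                pb ρ (fun v => x v k) (fun v => x v j) u) ∧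
      (∀ I J : Fin q → Fin (q + 3),
        ∑ L : Fin q → Fin (q + 3),
            dot (Zvec ρ x u I) (Zvec ρ x u L) * dot (Zvec ρ x u L) (Zvec ρ x u J) =
          dot (Zvec ρ x u I) (Zvec ρ x u J)) ∧
      (∑ I : Fin q → Fin (q + 3), dot (Zvec ρ x u I) (Zvec ρ x u I) = (q : ℝ) + 1) := by
  intro u hu
  have hr : ρ u ≠ 0 := hρ0 u hu
  have hgp : 0 < (gmat x u).det := hg u hu
  set a : Fin (q+3) → ℝ := vpd x 0 u with ha
  set b : Fin (q+3) → ℝ := vpd x 1 u with hb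
  have hpb : ∀ k l : Fin (q+3), pb ρ (fun v => x v k) (fun v => x v l) u
      = (1 / ρ u) * (a k * b l - b k * a l) := fun k l => rfl
  have hdet : (gmat x u).det = (∑ k, a k * a k) * (∑ k, b k * b k)
      - (∑ k, a k * b k) * (∑ k, a k * b k) := by
    rw [Matrix.det_fin_two]
    have h00 : gmat x u 0 0 = ∑ k, a k * a k := rfl
    have h01 : gmat x u 0 1 = ∑ k, a k * b k := rfl
    have h10 : gmat x u 1 0 = ∑ k, b k * a k := rfl
    have h11 : gmat x u 1 1 = ∑ k, b k * b k := rfl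
    rw [h00, h01, h10, h11]
    have hc : (∑ k, b k * a k) = ∑ k, a k * b k := Finset.sum_congr rfl fun k _ => mul_comm _ _
    rw [hc]
  have hfac : (0:ℝ) < (q.factorial : ℝ) := by exact_mod_cast q.factorial_pos
  have hX : (0:ℝ) < (gmat x u).det * (q.factorial : ℝ) := mul_pos hgp hfac
  have hsqrt : Real.sqrt ((gmat x u).det * (q.factorial:ℝ)) ≠ 0 :=
    ne_of_gt (Real.sqrt_pos.mpr hX)
  have hsq2 : Real.sqrt ((gmat x u).det * (q.factorial:ℝ)) *
      Real.sqrt ((gmat x u).det * (q.factorial:ℝ)) = (gmat x u).det * (q.factorial:ℝ) :=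
    Real.mul_self_sqrt hX.le
  have hZ : ∀ (I : Fin q → Fin (q+3)) (i : Fin (q+3)), Zvec ρ x u I i
      = (1 / Real.sqrt ((gmat x u).det * (q.factorial:ℝ))) *
          (∑ k, ∑ l, lc (tuple3 i k l I) * (a k * b l)) := by
    intro I i
    show (ρ u / (2 * Real.sqrt ((gmat x u).det * (Nat.factorial q)))) *
      (∑ k, ∑ l, lc (tuple3 i k l I) * pb ρ (fun v => x v k) (fun v => x v l) u) = _
    have h1 : (∑ k, ∑ l, lc (tuple3 i k l I) * pb ρ (fun v => x v k) (fun v => x v l) u)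
        = (1/ρ u) * ((∑ k, ∑ l, lc (tuple3 i k l I) * (a k * b l))
            - (∑ k, ∑ l, lc (tuple3 i k l I) * (b k * a l))) := by
      calc (∑ k, ∑ l, lc (tuple3 i k l I) * pb ρ (fun v => x v k) (fun v => x v l) u)
          = ∑ k, ∑ l, ((1/ρ u) * (lc (tuple3 i k l I) * (a k * b l))
              - (1/ρ u) * (lc (tuple3 i k l I) * (b k * a l))) := by
            refine Finset.sum_congr rfl fun k _ => Finset.sum_congr rfl fun l _ => ?_
            rw [hpb k l]
            ring
        _ = _ := by
            simp only [Finset.sum_sub_distrib, ← Finset.mul_sum]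
            ring
    rw [h1, sum_antisym12 a b i I]
    field_simp
    ring
  have hpbs : ∀ i j : Fin (q+3),
      ∑ k, pb ρ (fun v => x v i) (fun v => x v k) u * pb ρ (fun v => x v k) (fun v => x v j) u
      = (1/(ρ u * ρ u)) * ((∑ k, a k * b k) * (a i * b j) - (∑ k, b k * b k) * (a i * a j)
          - (∑ k, a k * a k) * (b i * b j) + (∑ k, a k * b k) * (b i * a j)) := by
    intro i j
    calc ∑ k, pb ρ (fun v => x v i) (fun v => x v k) u * pb ρ (fun v => x v k) (fun v => x v j) u
        = ∑ k, ((1/(ρ u * ρ u)) * ((a i * b j) * (a k * b k) - (a i * a j) * (b k * b k)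
            - (b i * b j) * (a k * a k) + (b i * a j) * (a k * b k))) := by
          refine Finset.sum_congr rfl fun k _ => ?_
          rw [hpb, hpb]
          ring
      _ = _ := by
          simp only [mul_sub, mul_add, Finset.sum_add_distrib, Finset.sum_sub_distrib,
            ← Finset.mul_sum]
          ring
  have hgne : (∑ k, a k * a k) * (∑ k, b k * b k) - (∑ k, a k * b k) * (∑ k, a k * b k) ≠ 0 := by
    rw [← hdet]; exact ne_of_gt hgp
  have hfne : (q.factorial : ℝ) ≠ 0 := ne_of_gt hfac
  have part1 : ∀ i j : Fin (q + 3),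
      ∑ I : Fin q → Fin (q + 3), Zvec ρ x u I i * Zvec ρ x u I j =
        (if i = j then (1 : ℝ) else 0) +
          ((ρ u) ^ 2 / (gmat x u).det) *
            ∑ k, pb ρ (fun v => x v i) (fun v => x v k) u *
              pb ρ (fun v => x v k) (fun v => x v j) u := by
    intro i j
    have hZZ : ∀ I : Fin q → Fin (q+3), Zvec ρ x u I i * Zvec ρ x u I j
        = (1 / ((gmat x u).det * (q.factorial:ℝ))) *
            ((∑ k, ∑ l, lc (tuple3 i k l I) * (a k * b l)) *
             (∑ k, ∑ l, lc (tuple3 j k l I) * (a k * b l))) := by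
      intro I
      rw [hZ, hZ]
      have h2 : ∀ c X Y : ℝ, (c*X)*(c*Y) = (c*c)*(X*Y) := fun _ _ _ => by ring
      rw [h2]
      congr 1
      rw [div_mul_div_comm, one_mul, hsq2]
    rw [Finset.sum_congr rfl fun I _ => hZZ I, ← Finset.mul_sum, key q a b i j, hpbs i j, hdet]
    by_cases hij : i = j
    · simp only [if_pos hij]
      have hD : (∑ x, a x ^ 2) * ∑ x, b x ^ 2 - (∑ x, a x * b x) ^ 2 ≠ 0 := by
        simpa [sq] using hgne
      field_simp
      ring
    · simp only [if_neg hij]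
      field_simp
      ring
  refine ⟨part1, ?_, ?_⟩
  · -- part 2
    intro I J
    have hZa : ∀ K : Fin q → Fin (q+3), ∑ i, a i * Zvec ρ x u K i = 0 := by
      intro K
      calc ∑ i, a i * Zvec ρ x u K i
          = ∑ i, (1 / Real.sqrt ((gmat x u).det * (q.factorial:ℝ))) *
              (a i * (∑ k, ∑ l, lc (tuple3 i k l K) * (a k * b l))) := by
            refine Finset.sum_congr rfl fun i _ => ?_
            rw [hZ]
            ring
        _ = (1 / Real.sqrt ((gmat x u).det * (q.factorial:ℝ))) *
              ∑ i, (a i * (∑ k, ∑ l, lc (tuple3 i k l K) * (a k * b l))) := by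
            rw [Finset.mul_sum]
        _ = 0 := by rw [orthA a b K, mul_zero]
    have hZb : ∀ K : Fin q → Fin (q+3), ∑ i, b i * Zvec ρ x u K i = 0 := by
      intro K
      calc ∑ i, b i * Zvec ρ x u K i
          = ∑ i, (1 / Real.sqrt ((gmat x u).det * (q.factorial:ℝ))) *
              (b i * (∑ k, ∑ l, lc (tuple3 i k l K) * (a k * b l))) := by
            refine Finset.sum_congr rfl fun i _ => ?_
            rw [hZ]
            ring
        _ = (1 / Real.sqrt ((gmat x u).det * (q.factorial:ℝ))) *
              ∑ i, (b i * (∑ k, ∑ l, lc (tuple3 i k l K) * (a k * b l))) := by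
            rw [Finset.mul_sum]
        _ = 0 := by rw [orthB a b K, mul_zero]
    calc ∑ L : Fin q → Fin (q + 3),
          dot (Zvec ρ x u I) (Zvec ρ x u L) * dot (Zvec ρ x u L) (Zvec ρ x u J)
        = ∑ L : Fin q → Fin (q + 3), ∑ i, ∑ j,
            (Zvec ρ x u I i * Zvec ρ x u L i) * (Zvec ρ x u J j * Zvec ρ x u L j) := by
          refine Finset.sum_congr rfl fun L _ => ?_
          rw [dot, dot, Finset.sum_mul_sum]
          exact Finset.sum_congr rfl fun i _ => Finset.sum_congr rfl fun j _ => by ring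
      _ = ∑ i, ∑ j, ∑ L : Fin q → Fin (q + 3),
            (Zvec ρ x u I i * Zvec ρ x u L i) * (Zvec ρ x u J j * Zvec ρ x u L j) := by
          rw [Finset.sum_comm]
          exact Finset.sum_congr rfl fun i _ => Finset.sum_comm
      _ = ∑ i, ∑ j, (Zvec ρ x u I i * Zvec ρ x u J j) *
            (∑ L : Fin q → Fin (q + 3), Zvec ρ x u L i * Zvec ρ x u L j) := by
          refine Finset.sum_congr rfl fun i _ => Finset.sum_congr rfl fun j _ => ?_
          exact (Finset.sum_congr rfl fun L _ => by ring).trans (Finset.mul_sum ..).symm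
      _ = ∑ i, ∑ j, ((Zvec ρ x u I i * Zvec ρ x u J j) * (if i = j then (1:ℝ) else 0)
            + (Zvec ρ x u I i * Zvec ρ x u J j) * (((ρ u) ^ 2 / (gmat x u).det) *
              ∑ k, pb ρ (fun v => x v i) (fun v => x v k) u *
                pb ρ (fun v => x v k) (fun v => x v j) u)) := by
          refine Finset.sum_congr rfl fun i _ => Finset.sum_congr rfl fun j _ => ?_
          rw [part1 i j]
          ring
      _ = dot (Zvec ρ x u I) (Zvec ρ x u J) := by
          simp only [Finset.sum_add_distrib]
          have hfirst : ∑ i, ∑ j, (Zvec ρ x u I i * Zvec ρ x u J j) * (if i = j then (1:ℝ) else 0)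
              = dot (Zvec ρ x u I) (Zvec ρ x u J) := by
            rw [dot]
            refine Finset.sum_congr rfl fun i _ => ?_
            simp [mul_ite, Finset.sum_ite_eq, Finset.mem_univ]
          have hsecond : ∑ i, ∑ j, (Zvec ρ x u I i * Zvec ρ x u J j) *
              (((ρ u) ^ 2 / (gmat x u).det) *
                ∑ k, pb ρ (fun v => x v i) (fun v => x v k) u *
                  pb ρ (fun v => x v k) (fun v => x v j) u) = 0 := by
            have hterm : ∀ i j : Fin (q+3), (Zvec ρ x u I i * Zvec ρ x u J j) *
                (((ρ u) ^ 2 / (gmat x u).det) *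
                  ∑ k, pb ρ (fun v => x v i) (fun v => x v k) u *
                    pb ρ (fun v => x v k) (fun v => x v j) u)
                = (((ρ u) ^ 2 / (gmat x u).det) * (1/(ρ u * ρ u))) *
                    ((∑ k, a k * b k) * ((a i * Zvec ρ x u I i) * (b j * Zvec ρ x u J j))
                    - (∑ k, b k * b k) * ((a i * Zvec ρ x u I i) * (a j * Zvec ρ x u J j))
                    - (∑ k, a k * a k) * ((b i * Zvec ρ x u I i) * (b j * Zvec ρ x u J j))
                    + (∑ k, a k * b k) * ((b i * Zvec ρ x u I i) * (a j * Zvec ρ x u J j))) := by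
              intro i j
              rw [hpbs i j]
              ring
            rw [Finset.sum_congr rfl fun i _ => Finset.sum_congr rfl fun j _ => hterm i j]
            simp only [mul_sub, mul_add, Finset.sum_add_distrib, Finset.sum_sub_distrib,
              ← Finset.mul_sum, ← Finset.sum_mul]
            rw [hZa I, hZb I]
            ring
          rw [hfirst, hsecond, add_zero]
  · -- part 3
    have hd : ∀ I : Fin q → Fin (q+3), dot (Zvec ρ x u I) (Zvec ρ x u I)
        = ∑ i, Zvec ρ x u I i * Zvec ρ x u I i := fun I => rfl
    rw [Finset.sum_congr rfl fun I _ => hd I, Finset.sum_comm]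
    rw [Finset.sum_congr rfl fun i (_ : i ∈ Finset.univ) => part1 i i]
    simp only [eq_self_iff_true, if_true]
    rw [Finset.sum_add_distrib]
    have hone : ∑ _i : Fin (q+3), (1:ℝ) = ((q:ℝ) + 3) := by
      rw [Finset.sum_const, Finset.card_univ, Fintype.card_fin, nsmul_eq_mul, mul_one]
      push_cast
      ring
    have hterm3 : ∀ i : Fin (q+3), ((ρ u) ^ 2 / (gmat x u).det) *
        (∑ k, pb ρ (fun v => x v i) (fun v => x v k) u *
          pb ρ (fun v => x v k) (fun v => x v i) u)
        = (((ρ u) ^ 2 / (gmat x u).det) * (1/(ρ u * ρ u))) *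
            ((∑ k, a k * b k) * (a i * b i) - (∑ k, b k * b k) * (a i * a i)
            - (∑ k, a k * a k) * (b i * b i) + (∑ k, a k * b k) * (a i * b i)) := by
      intro i
      rw [hpbs i i]
      ring
    rw [Finset.sum_congr rfl fun i (_ : i ∈ Finset.univ) => hterm3 i]
    simp only [mul_sub, mul_add, Finset.sum_add_distrib, Finset.sum_sub_distrib,
      ← Finset.mul_sum]
    rw [hone, hdet]
    field_simp
    have hD : -(∑ x, a x * b x) ^ 2 + (∑ x, a x ^ 2) * ∑ x, b x ^ 2 ≠ 0 := by
      rw [neg_add_eq_sub]; simpa [sq] using hgne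
    linear_combination (-2) * mul_inv_cancel₀ hD
end

section
/- The tangential components of the maps P and S with respect to the tangent frame are given explicitly by the metric and the second fundamental form: writing P(e_b) = Σ_a P^a_b e_a and S(e_b) = Σ_a S^a_b e_a (which is well defined since P and S map into the tangent plane), one has P^a_b = −(1/ρ) Σ_c g_{bc} ε^{ca} and S^a_b = −(1/ρ) Σ_c ε^{ac} h_{cb}, where ε^{12} = −ε^{21} = 1 and ε^{11} = ε^{22} = 0. -/
open scoped BigOperators

/-- the coordinate direction vector -/
def ec (a : Fin 2) : ℝ × ℝ := if a = 0 then (1, 0) else (0, 1)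

lemma pd_eq (a : Fin 2) (f : ℝ × ℝ → ℝ) (u : ℝ × ℝ) :
    pd a f u = fderiv ℝ f u (ec a) := rfl

lemma gmat_symm {m : ℕ} (x : ℝ × ℝ → Fin m → ℝ) (u : ℝ × ℝ) (a b : Fin 2) :
    gmat x u a b = gmat x u b a := by
  simp [gmat, dot, mul_comm]

lemma sum_split {m : ℕ} (f g : Fin m → ℝ) (r s : ℝ) :
    ∑ j, (f j * r + g j * s) = (∑ j, f j) * r + (∑ j, g j) * s := by
  rw [Finset.sum_add_distrib, Finset.sum_mul, Finset.sum_mul]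

lemma Pmap_eval {m : ℕ} (ρ : ℝ × ℝ → ℝ) (x : ℝ × ℝ → Fin m → ℝ) (u : ℝ × ℝ)
    (b : Fin 2) (i : Fin m) :
    Pmap ρ x u (vpd x b u) i =
      ((1 / ρ u) * gmat x u 1 b) * vpd x 0 u i + (-((1 / ρ u) * gmat x u 0 b)) * vpd x 1 u i := by
  have step : Pmap ρ x u (vpd x b u) i
      = ∑ j, (((1 / ρ u) * (vpd x 1 u j * vpd x b u j)) * vpd x 0 u i
            + (-((1 / ρ u) * (vpd x 0 u j * vpd x b u j))) * vpd x 1 u i) := by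
    show (∑ j, pb ρ (fun v => x v i) (fun v => x v j) u * vpd x b u j) = _
    refine Finset.sum_congr rfl fun j _ => ?_
    simp only [pb, vpd]
    ring
  rw [step, sum_split, ← Finset.mul_sum, Finset.sum_neg_distrib, ← Finset.mul_sum]
  rfl

lemma Smap_eval {m : ℕ} (ρ : ℝ × ℝ → ℝ) (x N : ℝ × ℝ → Fin m → ℝ) (u : ℝ × ℝ)
    (b : Fin 2) (i : Fin m) :
    Smap ρ x N u (vpd x b u) i =
      (-((1 / ρ u) * hmat x N u b 1)) * vpd x 0 u i + ((1 / ρ u) * hmat x N u b 0) * vpd x 1 u i := by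
  have step : Smap ρ x N u (vpd x b u) i
      = ∑ j, (((1 / ρ u) * (vpd x b u j * vpd N 1 u j)) * vpd x 0 u i
            + (-((1 / ρ u) * (vpd x b u j * vpd N 0 u j))) * vpd x 1 u i) := by
    show (∑ j, pb ρ (fun v => x v i) (fun v => N v j) u * vpd x b u j) = _
    refine Finset.sum_congr rfl fun j _ => ?_
    simp only [pb, vpd]
    ring
  rw [step, sum_split, ← Finset.mul_sum, Finset.sum_neg_distrib, ← Finset.mul_sum]
  have h1 : hmat x N u b 1 = -∑ j, vpd x b u j * vpd N 1 u j := rfl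
  have h0 : hmat x N u b 0 = -∑ j, vpd x b u j * vpd N 0 u j := rfl
  rw [h1, h0]
  ring

lemma coeff_unique {m : ℕ} {e0 e1 : Fin m → ℝ}
    (h : LinearIndependent ℝ ![e0, e1]) {c0 c1 d0 d1 : ℝ}
    (heq : ∀ i, c0 * e0 i + c1 * e1 i = d0 * e0 i + d1 * e1 i) :
    c0 = d0 ∧ c1 = d1 := by
  rw [Fintype.linearIndependent_iff] at h
  have key := h (fun a => if a = 0 then c0 - d0 else c1 - d1) ?_
  · have h0 := key 0
    have h1 := key 1
    simp only [if_pos rfl] at h0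
    norm_num at h0 h1
    constructor <;> linarith
  · funext i
    simp only [Fin.sum_univ_two, Matrix.cons_val_zero, Matrix.cons_val_one, Matrix.head_cons,
      Pi.add_apply, Pi.smul_apply, smul_eq_mul, Pi.zero_apply]
    norm_num
    have := heq i
    ring_nf
    ring_nf at this
    linarith

lemma aux_key {m : ℕ} {U : Set (ℝ × ℝ)} (hU : IsOpen U)
    {x N : ℝ × ℝ → Fin m → ℝ} (hx : ContDiffOn ℝ (⊤ : ℕ∞) x U) (hN : ContDiffOn ℝ (⊤ : ℕ∞) N U)
    (hNt : ∀ u ∈ U, ∀ a : Fin 2, dot (N u) (vpd x a u) = 0)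
    {u : ℝ × ℝ} (hu : u ∈ U) (c d : Fin 2) :
    ∑ i, pd c (fun v => N v i) u * pd d (fun v => x v i) u
      = -∑ i, N u i * fderiv ℝ (fderiv ℝ (fun v => x v i)) u (ec c) (ec d) := by
  have hmem : U ∈ nhds u := hU.mem_nhds hu
  have hxi : ∀ i, ContDiffAt ℝ (⊤ : ℕ∞) (fun v => x v i) u := fun i =>
    contDiffAt_pi.mp (hx.contDiffAt hmem) i
  have hNi : ∀ i, ContDiffAt ℝ (⊤ : ℕ∞) (fun v => N v i) u := fun i =>
    contDiffAt_pi.mp (hN.contDiffAt hmem) i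
  -- derivative of v ↦ fderiv (x^i) v (ec d)
  have hf2 : ∀ i, ContDiffAt ℝ (⊤ : ℕ∞) (fderiv ℝ (fun v => x v i)) u := fun i =>
    (hxi i).fderiv_right (m := (⊤ : ℕ∞)) (by simp)
  have hGi : ∀ i, HasFDerivAt (fun v => fderiv ℝ (fun w => x w i) v (ec d))
      ((fderiv ℝ (fun w => x w i) u).comp (0 : (ℝ × ℝ) →L[ℝ] (ℝ × ℝ)) +
        (fderiv ℝ (fderiv ℝ (fun w => x w i)) u).flip (ec d)) u := fun i =>
    ((hf2 i).differentiableAt (by simp)).hasFDerivAt.clm_apply (hasFDerivAt_const (ec d) u)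
  have hP : ∀ i ∈ Finset.univ, HasFDerivAt
      (fun v => N v i * fderiv ℝ (fun w => x w i) v (ec d))
      (N u i • ((fderiv ℝ (fun w => x w i) u).comp (0 : (ℝ × ℝ) →L[ℝ] (ℝ × ℝ)) +
          (fderiv ℝ (fderiv ℝ (fun w => x w i)) u).flip (ec d)) +
        (fderiv ℝ (fun w => x w i) u (ec d)) • fderiv ℝ (fun v => N v i) u) u := by
    intro i _
    exact (((hNi i).differentiableAt (by simp)).hasFDerivAt).mul (hGi i)
  have hF := HasFDerivAt.fun_sum hP
  -- the summed function vanishes on U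
  have heq : (fun v => ∑ i, N v i * fderiv ℝ (fun w => x w i) v (ec d)) =ᶠ[nhds u]
      (fun _ => (0 : ℝ)) := by
    filter_upwards [hmem] with v hv
    have := hNt v hv d
    simpa [dot, vpd, pd_eq] using this
  have hzero : HasFDerivAt (fun _ : ℝ × ℝ => (0 : ℝ))
      (∑ i, (N u i • ((fderiv ℝ (fun w => x w i) u).comp (0 : (ℝ × ℝ) →L[ℝ] (ℝ × ℝ)) +
          (fderiv ℝ (fderiv ℝ (fun w => x w i)) u).flip (ec d)) +
        (fderiv ℝ (fun w => x w i) u (ec d)) • fderiv ℝ (fun v => N v i) u)) u :=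
    hF.congr_of_eventuallyEq heq.symm
  have hD : (∑ i, (N u i • ((fderiv ℝ (fun w => x w i) u).comp (0 : (ℝ × ℝ) →L[ℝ] (ℝ × ℝ)) +
          (fderiv ℝ (fderiv ℝ (fun w => x w i)) u).flip (ec d)) +
        (fderiv ℝ (fun w => x w i) u (ec d)) • fderiv ℝ (fun v => N v i) u)) = 0 :=
    hzero.unique (hasFDerivAt_const 0 u)
  have happ := congrArg (fun (L : (ℝ × ℝ) →L[ℝ] ℝ) => L (ec c)) hD
  simp only [ContinuousLinearMap.sum_apply, ContinuousLinearMap.add_apply,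
    ContinuousLinearMap.smul_apply, ContinuousLinearMap.comp_apply,
    ContinuousLinearMap.zero_apply, map_zero, ContinuousLinearMap.flip_apply,
    ContinuousLinearMap.coe_smul', Pi.smul_apply, smul_eq_mul, ContinuousLinearMap.zero_apply,
    mul_zero, zero_add] at happ
  have : ∑ i, (N u i * fderiv ℝ (fderiv ℝ (fun w => x w i)) u (ec c) (ec d) +
      fderiv ℝ (fun w => x w i) u (ec d) * fderiv ℝ (fun v => N v i) u (ec c)) = 0 := by
    simpa using happ
  rw [Finset.sum_add_distrib] at this
  have goal : ∑ i, pd c (fun v => N v i) u * pd d (fun v => x v i) u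
      = ∑ i, fderiv ℝ (fun w => x w i) u (ec d) * fderiv ℝ (fun v => N v i) u (ec c) := by
    apply Finset.sum_congr rfl
    intro i _
    rw [pd_eq, pd_eq, mul_comm]
  rw [goal]
  linarith

lemma hmat_symm {m : ℕ} {U : Set (ℝ × ℝ)} (hU : IsOpen U)
    {x N : ℝ × ℝ → Fin m → ℝ} (hx : ContDiffOn ℝ (⊤ : ℕ∞) x U) (hN : ContDiffOn ℝ (⊤ : ℕ∞) N U)
    (hNt : ∀ u ∈ U, ∀ a : Fin 2, dot (N u) (vpd x a u) = 0)
    {u : ℝ × ℝ} (hu : u ∈ U) (a b : Fin 2) :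
    hmat x N u a b = hmat x N u b a := by
  have hmem : U ∈ nhds u := hU.mem_nhds hu
  have hsymm : ∀ i, fderiv ℝ (fderiv ℝ (fun v => x v i)) u (ec b) (ec a)
      = fderiv ℝ (fderiv ℝ (fun v => x v i)) u (ec a) (ec b) := by
    intro i
    have hxi : ContDiffAt ℝ (⊤ : ℕ∞) (fun v => x v i) u := contDiffAt_pi.mp (hx.contDiffAt hmem) i
    exact (hxi.isSymmSndFDerivAt (by simp [minSmoothness_of_isRCLikeNormedField]; exact WithTop.coe_le_coe.mpr le_top)) (ec b) (ec a)
  have e1 : hmat x N u a b = -∑ i, pd b (fun v => N v i) u * pd a (fun v => x v i) u := by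
    simp only [hmat, dot, Matrix.of_apply, vpd, neg_inj]
    exact Finset.sum_congr rfl fun j _ => mul_comm _ _
  have e2 : hmat x N u b a = -∑ i, pd a (fun v => N v i) u * pd b (fun v => x v i) u := by
    simp only [hmat, dot, Matrix.of_apply, vpd, neg_inj]
    exact Finset.sum_congr rfl fun j _ => mul_comm _ _
  rw [e1, e2, aux_key hU hx hN hNt hu b a, aux_key hU hx hN hNt hu a b]
  simp only [neg_neg]
  exact Finset.sum_congr rfl fun i _ => by rw [hsymm i]

theorem statement19 (U : Set (ℝ × ℝ)) (hU : IsOpen U) (p : ℕ) (hp : 1 ≤ p)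
    (ρ : ℝ × ℝ → ℝ) (hρ : ContDiffOn ℝ (⊤ : ℕ∞) ρ U) (hρ0 : ∀ u ∈ U, ρ u ≠ 0)
    (x : ℝ × ℝ → Fin (p + 2) → ℝ) (hx : ContDiffOn ℝ (⊤ : ℕ∞) x U)
    (hind : ∀ u ∈ U, LinearIndependent ℝ ![vpd x 0 u, vpd x 1 u])
    (hg : ∀ u ∈ U, 0 < (gmat x u).det)
    (N : ℝ × ℝ → Fin (p + 2) → ℝ) (hN : ContDiffOn ℝ (⊤ : ℕ∞) N U)
    (hNt : ∀ u ∈ U, ∀ a : Fin 2, dot (N u) (vpd x a u) = 0)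
    (hNn : ∀ u ∈ U, dot (N u) (N u) = 1) :
    ∀ u ∈ U,
      (∀ Pc : Fin 2 → Fin 2 → ℝ,
        (∀ b : Fin 2, ∀ i, Pmap ρ x u (vpd x b u) i = ∑ a, Pc a b * vpd x a u i) →
        ∀ a b : Fin 2, Pc a b = -(1 / ρ u) * ∑ c, gmat x u b c * eps2 c a) ∧
      (∀ Sc : Fin 2 → Fin 2 → ℝ,
        (∀ b : Fin 2, ∀ i, Smap ρ x N u (vpd x b u) i = ∑ a, Sc a b * vpd x a u i) →
        ∀ a b : Fin 2, Sc a b = -(1 / ρ u) * ∑ c, eps2 a c * hmat x N u c b) := by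
  intro u hu
  constructor
  · intro Pc hPc a b
    have heq : ∀ i, Pc 0 b * vpd x 0 u i + Pc 1 b * vpd x 1 u i =
        ((1 / ρ u) * gmat x u 1 b) * vpd x 0 u i + (-((1 / ρ u) * gmat x u 0 b)) * vpd x 1 u i := by
      intro i
      rw [← Pmap_eval ρ x u b i, hPc b i, Fin.sum_univ_two]
    obtain ⟨h0, h1⟩ := coeff_unique (hind u hu) heq
    fin_cases a <;>
      simp only [Fin.zero_eta, Fin.mk_one, Fin.isValue, Fin.sum_univ_two, h0, h1] <;>
      simp [eps2] <;> rw [gmat_symm x u b] <;> first | tauto | ring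
  · intro Sc hSc a b
    have heq : ∀ i, Sc 0 b * vpd x 0 u i + Sc 1 b * vpd x 1 u i =
        (-((1 / ρ u) * hmat x N u b 1)) * vpd x 0 u i +
          ((1 / ρ u) * hmat x N u b 0) * vpd x 1 u i := by
      intro i
      rw [← Smap_eval ρ x N u b i, hSc b i, Fin.sum_univ_two]
    obtain ⟨h0, h1⟩ := coeff_unique (hind u hu) heq
    fin_cases a <;>
      simp only [Fin.zero_eta, Fin.mk_one, Fin.isValue, Fin.sum_univ_two, h0, h1] <;>
      simp [eps2] <;> rw [hmat_symm hU hx hN hNt hu b] <;> first | tauto | ring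
end
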